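/- arXiv:2108.07149 — 7 statements merged into one kernel-verified Lean document; each statement's English description precedes it below -/
import Mathlib

section
/- Let q ∈ ℂ with 0 < |q| < 1 and let y ∈ ℂ be such that y ≠ q^n for every n ∈ ℤ. Then the function s(·,y;q) : x ↦ Σ_{n∈ℤ} q^{n(n−1)/2}·(−x)^n / (q^n − y) is holomorphic on ℂ ∖ {0}, i.e. it is complex-differentiable at every point of the open set ℂ ∖ {0}. -/
/-!
On an annulus `r < ‖x‖ < R` the `n`-th term of `s(x,y;q)` is bounded by a constant times
`‖q‖ ^ (n(n-1)/2) · (max R r⁻¹ / ‖q‖) ^ |n|`: the denominators satisfy `‖q ^ n - y‖ ≥ c ‖q‖ ^ |n|`,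
because `q ^ n - y → -y` as `n → ∞` and `q ^ (-k) - y = q ^ (-k) (1 - y q ^ k)` with
`1 - y q ^ k → 1`, and neither sequence vanishes since `y ∉ q ^ ℤ`. The quadratic exponent beats
every geometric factor, so the series converges normally on the annulus and its sum is holomorphic
there (Weierstrass).
-/

open Filter Topology Set

/-- `s(x,y;q) := Σ_{n∈ℤ} q^{n(n−1)/2}·(−x)^n / (q^n − y)`. -/
noncomputable def appellS (q x y : ℂ) : ℂ :=
  ∑' n : ℤ, q ^ (n * (n - 1) / 2) * (-x) ^ n / (q ^ n - y)

theorem exists_pos_le_norm_of_tendsto {E : Type*} [NormedAddCommGroup E] {f : ℕ → E} {a : E}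
    (hf : Tendsto f atTop (𝓝 a)) (ha : a ≠ 0) (hf0 : ∀ k, f k ≠ 0) :
    ∃ c > 0, ∀ k, c ≤ ‖f k‖ := by
  obtain ⟨z, hzK, hmin⟩ :=
    hf.isCompact_insert_range.exists_isMinOn (insert_nonempty a _) continuous_norm.continuousOn
  have hz : z ≠ 0 := by
    rcases hzK with rfl | ⟨k, rfl⟩
    exacts [ha, hf0 k]
  exact ⟨‖z‖, norm_pos_iff.2 hz, fun k => hmin (mem_insert_of_mem _ ⟨k, rfl⟩)⟩

section NormedField

variable {𝕜 : Type*} [NormedField 𝕜] {q y : 𝕜}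

theorem exists_pos_mul_norm_pow_le_norm_pow_sub (hq : ‖q‖ < 1) (hy : ∀ k : ℕ, y ≠ q ^ k) :
    ∃ c > 0, ∀ k : ℕ, c * ‖q‖ ^ k ≤ ‖q ^ k - y‖ := by
  rcases eq_or_ne y 0 with rfl | hy0
  · exact ⟨1, one_pos, fun k => by simp⟩
  have hlim : Tendsto (fun k : ℕ => q ^ k - y) atTop (𝓝 (-y)) := by
    simpa using (tendsto_pow_atTop_nhds_zero_of_norm_lt_one hq).sub_const y
  obtain ⟨c, hc, hle⟩ := exists_pos_le_norm_of_tendsto hlim (neg_ne_zero.2 hy0)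
    fun k => sub_ne_zero.2 (hy k).symm
  exact ⟨c, hc, fun k =>
    (mul_le_of_le_one_right hc.le (pow_le_one₀ (norm_nonneg q) hq.le)).trans (hle k)⟩

theorem exists_pos_le_norm_one_sub_mul_pow (hq : ‖q‖ < 1) (hy : ∀ k : ℕ, y * q ^ k ≠ 1) :
    ∃ c > 0, ∀ k : ℕ, c ≤ ‖1 - y * q ^ k‖ :=
  exists_pos_le_norm_of_tendsto
    (by simpa using ((tendsto_pow_atTop_nhds_zero_of_norm_lt_one hq).const_mul y).const_sub 1)
    one_ne_zero fun k => sub_ne_zero.2 (hy k).symm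

theorem exists_pos_mul_norm_pow_natAbs_le_norm_zpow_sub (hq0 : q ≠ 0) (hq1 : ‖q‖ < 1)
    (hy : ∀ n : ℤ, y ≠ q ^ n) : ∃ c > 0, ∀ n : ℤ, c * ‖q‖ ^ n.natAbs ≤ ‖q ^ n - y‖ := by
  obtain ⟨c₁, hc₁, h₁⟩ := exists_pos_mul_norm_pow_le_norm_pow_sub hq1 fun k => by
    exact_mod_cast hy k
  obtain ⟨c₂, hc₂, h₂⟩ := exists_pos_le_norm_one_sub_mul_pow hq1 fun k h =>
    hy (-k) (by rw [zpow_neg, zpow_natCast]; exact eq_inv_of_mul_eq_one_left h)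
  have hpow_le_one : ∀ k : ℕ, ‖q‖ ^ k ≤ 1 := fun k => pow_le_one₀ (norm_nonneg q) hq1.le
  refine ⟨min c₁ c₂, lt_min hc₁ hc₂, fun n => ?_⟩
  rcases Int.eq_nat_or_neg n with ⟨k, rfl | rfl⟩
  · calc min c₁ c₂ * ‖q‖ ^ k ≤ c₁ * ‖q‖ ^ k := by gcongr; exact min_le_left _ _
      _ ≤ ‖q ^ (k : ℤ) - y‖ := by simpa using h₁ k
  · have hfactor : q ^ (-(k : ℤ)) - y = (q ^ k)⁻¹ * (1 - y * q ^ k) := by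
      rw [zpow_neg, zpow_natCast, mul_sub, mul_one, mul_left_comm, inv_mul_cancel₀
        (pow_ne_zero k hq0), mul_one]
    calc min c₁ c₂ * ‖q‖ ^ (-(k : ℤ)).natAbs ≤ c₂ := by
          rw [Int.natAbs_neg, Int.natAbs_natCast]
          exact (mul_le_of_le_one_right (lt_min hc₁ hc₂).le (hpow_le_one k)).trans
            (min_le_right _ _)
      _ ≤ ‖1 - y * q ^ k‖ := h₂ k
      _ ≤ ‖q ^ (-(k : ℤ)) - y‖ := by
          rw [hfactor, norm_mul, norm_inv, norm_pow]
          exact le_mul_of_one_le_left (norm_nonneg _)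
            (one_le_inv₀ (by positivity) |>.2 (hpow_le_one k))

end NormedField

theorem summable_zpow_triangle_mul_pow {t : ℝ} (ht0 : 0 < t) (ht1 : t < 1) (R : ℝ) :
    Summable fun k : ℕ => t ^ ((k : ℤ) * (k - 1) / 2) * R ^ k := by
  have hstep : ∀ k : ℕ, ((k + 1 : ℕ) : ℤ) * ((k + 1 : ℕ) - 1) / 2 = (k : ℤ) * (k - 1) / 2 + k := by
    intro k
    have : ((k : ℤ) + 1) * ((k : ℤ) + 1 - 1) = (k : ℤ) * (k - 1) + 2 * k := by ring
    push_cast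
    omega
  have hsmall : ∀ᶠ k : ℕ in atTop, t ^ k * |R| ≤ 1 / 2 := by
    have := (tendsto_pow_atTop_nhds_zero_of_lt_one ht0.le ht1).mul_const |R|
    rw [zero_mul] at this
    exact this.eventually (eventually_le_nhds (by norm_num))
  refine summable_of_ratio_norm_eventually_le (r := 1 / 2) (by norm_num) ?_
  filter_upwards [hsmall] with k hk
  have hratio : t ^ ((k : ℤ) * (k - 1) / 2 + k) * R ^ (k + 1)
      = (t ^ k * R) * (t ^ ((k : ℤ) * (k - 1) / 2) * R ^ k) := by
    rw [zpow_add₀ ht0.ne', zpow_natCast, pow_succ]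
    ring
  rw [hstep, hratio, norm_mul]
  gcongr
  simpa [abs_of_pos ht0] using hk

theorem summable_int_zpow_triangle_mul_pow {t : ℝ} (ht0 : 0 < t) (ht1 : t < 1) (R : ℝ) :
    Summable fun n : ℤ => t ^ (n * (n - 1) / 2) * R ^ n.natAbs := by
  refine Summable.of_nat_of_neg ?_ ?_
  · simpa using summable_zpow_triangle_mul_pow ht0 ht1 R
  · refine (summable_zpow_triangle_mul_pow ht0 ht1 (t * R)).congr fun k => ?_
    have hexp : -(k : ℤ) * (-(k : ℤ) - 1) / 2 = (k : ℤ) * (k - 1) / 2 + k := by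
      have : -(k : ℤ) * (-(k : ℤ) - 1) = (k : ℤ) * (k - 1) + 2 * k := by ring
      omega
    rw [hexp, Int.natAbs_neg, Int.natAbs_natCast, zpow_add₀ ht0.ne', zpow_natCast, mul_pow]
    ring

theorem zpow_le_max_pow_natAbs {α : Type*} [Field α] [LinearOrder α] [IsStrictOrderedRing α]
    {a r R : α} (hr : 0 < r) (hra : r ≤ a) (haR : a ≤ R) (n : ℤ) :
    a ^ n ≤ max R r⁻¹ ^ n.natAbs := by
  rcases Int.eq_nat_or_neg n with ⟨k, rfl | rfl⟩
  · simpa using pow_le_pow_left₀ (hr.le.trans hra) (haR.trans (le_max_left _ _)) k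
  · rw [Int.natAbs_neg, Int.natAbs_natCast, zpow_neg, zpow_natCast, ← inv_pow]
    exact pow_le_pow_left₀ (inv_nonneg.2 (hr.le.trans hra))
      ((inv_anti₀ hr hra).trans (le_max_right _ _)) k

noncomputable def appellTerm (q y : ℂ) (n : ℤ) (x : ℂ) : ℂ :=
  q ^ (n * (n - 1) / 2) * (-x) ^ n / (q ^ n - y)

theorem differentiableAt_appellTerm (q y : ℂ) (n : ℤ) {x : ℂ} (hx : x ≠ 0) :
    DifferentiableAt ℂ (appellTerm q y n) x :=
  (((differentiableAt_zpow.2 (Or.inl (neg_ne_zero.2 hx))).comp x differentiableAt_id.neg).const_mul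
    _).div_const _

theorem norm_appellTerm_le {q y : ℂ} {c : ℝ} (hc : 0 < c) (hq0 : q ≠ 0)
    (hden : ∀ n : ℤ, c * ‖q‖ ^ n.natAbs ≤ ‖q ^ n - y‖) {r R : ℝ} (hr : 0 < r) {w : ℂ}
    (hw : ‖w‖ ∈ Icc r R) (n : ℤ) :
    ‖appellTerm q y n w‖ ≤ c⁻¹ * (‖q‖ ^ (n * (n - 1) / 2) * (max R r⁻¹ / ‖q‖) ^ n.natAbs) := by
  have hq : 0 < ‖q‖ := norm_pos_iff.2 hq0
  calc ‖appellTerm q y n w‖ = ‖q‖ ^ (n * (n - 1) / 2) * ‖w‖ ^ n / ‖q ^ n - y‖ := by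
        rw [appellTerm, norm_div, norm_mul, norm_zpow, norm_zpow, norm_neg]
    _ ≤ ‖q‖ ^ (n * (n - 1) / 2) * max R r⁻¹ ^ n.natAbs / (c * ‖q‖ ^ n.natAbs) := by
        have hden_pos : 0 < c * ‖q‖ ^ n.natAbs := mul_pos hc (pow_pos hq _)
        gcongr
        exacts [zpow_le_max_pow_natAbs hr hw.1 hw.2 n, hden n]
    _ = _ := by
        rw [div_pow]
        field_simp

theorem differentiableOn_appellS_annulus {q y : ℂ} (hq0 : q ≠ 0) (hq1 : ‖q‖ < 1)
    (hy : ∀ n : ℤ, y ≠ q ^ n) {r R : ℝ} (hr : 0 < r) :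
    DifferentiableOn ℂ (fun x => appellS q x y) (norm ⁻¹' Ioo r R) := by
  obtain ⟨c, hc, hden⟩ := exists_pos_mul_norm_pow_natAbs_le_norm_zpow_sub hq0 hq1 hy
  exact Complex.differentiableOn_tsum_of_summable_norm
    ((summable_int_zpow_triangle_mul_pow (norm_pos_iff.2 hq0) hq1 _).mul_left c⁻¹)
    (fun n w hw => (differentiableAt_appellTerm q y n
      (norm_pos_iff.1 (hr.trans hw.1))).differentiableWithinAt)
    (isOpen_Ioo.preimage continuous_norm)
    (fun n w hw => norm_appellTerm_le hc hq0 hden hr (Ioo_subset_Icc_self hw) n)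

/-- For `0 < |q| < 1` and `y ∉ q^ℤ`, the function `x ↦ s(x,y;q)` is holomorphic on
`ℂ ∖ {0}`: it is complex-differentiable at every point of this open set. -/
theorem appell_lerch_holomorphic_fst (q y : ℂ)
    (hq0 : 0 < ‖q‖) (hq1 : ‖q‖ < 1)
    (hy : ∀ n : ℤ, y ≠ q ^ n) :
    ∀ x : ℂ, x ≠ 0 → DifferentiableAt ℂ (fun x : ℂ => appellS q x y) x := by
  intro x hx
  have hx0 : 0 < ‖x‖ := norm_pos_iff.2 hx
  have hx_mem : x ∈ norm ⁻¹' Ioo (‖x‖ / 2) (2 * ‖x‖) := by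
    constructor <;> linarith
  exact (differentiableOn_appellS_annulus (norm_pos_iff.1 hq0) hq1 hy
    (half_pos hx0)).differentiableAt ((isOpen_Ioo.preimage continuous_norm).mem_nhds hx_mem)
end

section
/- Let q ∈ ℂ with 0 < |q| < 1, let x ∈ ℂ with x ≠ 0, and let y ∈ ℂ be such that y ≠ q^n for every n ∈ ℤ. Assume ϑ(x;q) ≠ 0 and ϑ(qx;q) ≠ 0. Then the Appell–Lerch sum κ(x,y;q) := s(x,y;q)/ϑ(x;q) satisfies κ(qx, y; q) = −x·y·κ(x, y; q) − x. -/
/-- The theta function `ϑ(x;q) := Σ_{n∈ℤ} (−x)^n q^{n(n−1)/2}`. -/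
noncomputable def theta (q x : ℂ) : ℂ := ∑' n : ℤ, (-x) ^ n * q ^ (n * (n - 1) / 2)

/-- The Appell–Lerch sum `κ(x,y;q) := s(x,y;q)/ϑ(x;q)`. -/
noncomputable def appellLerch (q x y : ℂ) : ℂ := appellS q x y / theta q x

/-!
Shifting the summation index by one gives `ϑ(x) = -x ϑ(qx)`, and the partial fraction
`q^n / (q^n - y) = 1 + y / (q^n - y)` gives `s(qx, y) = y s(x, y) + ϑ(x)`; dividing the latter by
`ϑ(qx)` is the transformation law. Every series involved converges absolutely, since its terms decay
like `|q|^(n²/2)` in both directions.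
-/

open Filter Topology Asymptotics

theorem Int.add_one_mul_ediv_two (n : ℤ) : (n + 1) * (n + 1 - 1) / 2 = n * (n - 1) / 2 + n := by
  rw [show (n + 1) * (n + 1 - 1) = n * (n - 1) + n * 2 by ring,
    Int.add_mul_ediv_right _ _ two_ne_zero]

theorem Int.neg_mul_ediv_two (n : ℤ) : -n * (-n - 1) / 2 = n * (n - 1) / 2 + n := by
  rw [show -n * (-n - 1) = n * (n - 1) + n * 2 by ring,
    Int.add_mul_ediv_right _ _ two_ne_zero]

theorem summable_mul_of_summable_norm_of_tendsto {ι 𝕜 : Type*} [NormedField 𝕜] [CompleteSpace 𝕜]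
    {f g : ι → 𝕜} {c : 𝕜} (hf : Summable fun i => ‖f i‖) (hg : Tendsto g cofinite (𝓝 c)) :
    Summable fun i => f i * g i :=
  summable_of_isBigO hf (((isBigO_refl f cofinite).mul (hg.isBigO_one 𝕜)).norm_right.congr_right
    fun i => by simp)

noncomputable def thetaTerm (q x : ℂ) (n : ℤ) : ℂ := x ^ n * q ^ (n * (n - 1) / 2)

section thetaTerm

variable {q x : ℂ}

theorem thetaTerm_mul (q c x : ℂ) (n : ℤ) : thetaTerm q (c * x) n = c ^ n * thetaTerm q x n := by
  simp only [thetaTerm, mul_zpow]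
  ring

theorem thetaTerm_add_one (hq : q ≠ 0) (hx : x ≠ 0) (n : ℤ) :
    thetaTerm q x (n + 1) = x * q ^ n * thetaTerm q x n := by
  simp only [thetaTerm, Int.add_one_mul_ediv_two, zpow_add₀ hq, zpow_add_one₀ hx]
  ring

theorem thetaTerm_neg (hq : q ≠ 0) (n : ℤ) : thetaTerm q x (-n) = thetaTerm q (q / x) n := by
  simp only [thetaTerm, Int.neg_mul_ediv_two, zpow_add₀ hq, zpow_neg, div_zpow]
  ring

theorem summable_thetaTerm_natCast (hq : q ≠ 0) (hq1 : ‖q‖ < 1) (hx : x ≠ 0) :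
    Summable fun n : ℕ => thetaTerm q x n := by
  have hlim : Tendsto (fun n : ℕ => ‖x‖ * ‖q‖ ^ n) atTop (𝓝 0) := by
    simpa using (tendsto_pow_atTop_nhds_zero_of_lt_one (norm_nonneg q) hq1).const_mul ‖x‖
  refine summable_of_ratio_norm_eventually_le (r := 1 / 2) (by norm_num) ?_
  filter_upwards [hlim.eventually (ge_mem_nhds (by norm_num : (0 : ℝ) < 1 / 2))] with n hn
  rw [Nat.cast_add_one, thetaTerm_add_one hq hx, norm_mul, norm_mul, norm_zpow, zpow_natCast]
  gcongr

theorem summable_thetaTerm (hq : q ≠ 0) (hq1 : ‖q‖ < 1) (hx : x ≠ 0) :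
    Summable (thetaTerm q x) := by
  refine .of_nat_of_neg (summable_thetaTerm_natCast hq hq1 hx) ?_
  simpa only [thetaTerm_neg hq] using summable_thetaTerm_natCast hq hq1 (div_ne_zero hq hx)

end thetaTerm

theorem theta_eq_thetaTerm (q x : ℂ) : theta q x = ∑' n : ℤ, thetaTerm q (-x) n := rfl

theorem theta_eq_neg_mul_theta_mul {q x : ℂ} (hq : q ≠ 0) (hx : x ≠ 0) :
    theta q x = -x * theta q (q * x) := by
  rw [theta_eq_thetaTerm, ← (Equiv.addRight (1 : ℤ)).tsum_eq, theta_eq_thetaTerm,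
    ← tsum_mul_left]
  congr 1 with n
  rw [Equiv.coe_addRight, thetaTerm_add_one hq (neg_ne_zero.mpr hx), neg_mul_eq_mul_neg q,
    thetaTerm_mul, mul_assoc]

theorem summable_thetaTerm_div {q x : ℂ} (y : ℂ) (hq : q ≠ 0) (hq1 : ‖q‖ < 1) (hx : x ≠ 0) :
    Summable fun n : ℤ => thetaTerm q x n / (q ^ n - y) := by
  rcases eq_or_ne y 0 with rfl | hy0
  · refine (summable_thetaTerm hq hq1 (mul_ne_zero (inv_ne_zero hq) hx)).congr fun n => ?_
    rw [thetaTerm_mul, inv_zpow, sub_zero, div_eq_inv_mul]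
  have hqn : Tendsto (fun n : ℕ => q ^ n) cofinite (𝓝 0) := by
    rw [Nat.cofinite_eq_atTop]
    exact tendsto_pow_atTop_nhds_zero_of_norm_lt_one hq1
  refine .of_nat_of_neg ?_ ?_
  · have hlim : Tendsto (fun n : ℕ => (q ^ n - y)⁻¹) cofinite (𝓝 (0 - y)⁻¹) :=
      (hqn.sub_const y).inv₀ (by simpa using hy0)
    simpa only [div_eq_mul_inv, zpow_natCast] using
      summable_mul_of_summable_norm_of_tendsto (summable_thetaTerm_natCast hq hq1 hx).norm hlim
  · have hlim : Tendsto (fun n : ℕ => q ^ n / (1 - y * q ^ n)) cofinite (𝓝 (0 / (1 - y * 0))) :=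
      hqn.div (tendsto_const_nhds.sub (hqn.const_mul y)) (by simp)
    -- also true where `1 - y q^n = 0`, both sides then being junk zeros
    have hterm (n : ℕ) : thetaTerm q x (-n) / (q ^ (-n : ℤ) - y)
        = thetaTerm q (q / x) n * (q ^ n / (1 - y * q ^ n)) := by
      have hqn0 : q ^ n ≠ 0 := pow_ne_zero n hq
      rw [thetaTerm_neg hq, zpow_neg, zpow_natCast, div_eq_mul_inv, ← inv_div]
      congr 2
      field_simp
    simpa only [hterm] using summable_mul_of_summable_norm_of_tendsto
      (summable_thetaTerm_natCast hq hq1 (div_ne_zero hq hx)).norm hlim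

theorem appellS_eq_tsum_thetaTerm (q x y : ℂ) :
    appellS q x y = ∑' n : ℤ, thetaTerm q (-x) n / (q ^ n - y) := by
  simp only [appellS, thetaTerm, mul_comm]

theorem appellS_q_mul {q x y : ℂ} (hq : q ≠ 0) (hq1 : ‖q‖ < 1) (hx : x ≠ 0)
    (hy : ∀ n : ℤ, y ≠ q ^ n) :
    appellS q (q * x) y = y * appellS q x y + theta q x := by
  have hx' : -x ≠ 0 := neg_ne_zero.mpr hx
  rw [appellS_eq_tsum_thetaTerm, appellS_eq_tsum_thetaTerm, theta_eq_thetaTerm, ← tsum_mul_left,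
    ← ((summable_thetaTerm_div y hq hq1 hx').mul_left y).tsum_add (summable_thetaTerm hq hq1 hx')]
  congr 1 with n
  have hn : q ^ n - y ≠ 0 := sub_ne_zero.mpr (hy n).symm
  rw [neg_mul_eq_mul_neg, thetaTerm_mul]
  field_simp
  ring

theorem appell_lerch_elliptic_transformation_general (q x y : ℂ)
    (hq0 : 0 < ‖q‖) (hq1 : ‖q‖ < 1)
    (hx : x ≠ 0) (hy : ∀ n : ℤ, y ≠ q ^ n)
    (hθ' : theta q (q * x) ≠ 0) :
    appellLerch q (q * x) y = -x * y * appellLerch q x y - x := by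
  have hq : q ≠ 0 := norm_pos_iff.mp hq0
  rw [appellLerch, appellLerch, appellS_q_mul hq hq1 hx hy, theta_eq_neg_mul_theta_mul hq hx]
  generalize theta q (q * x) = t at hθ' ⊢
  field_simp
  ring

/-- Elliptic transformation of the Appell–Lerch sum:
`κ(qx, y; q) = −x·y·κ(x, y; q) − x` for `0 < |q| < 1`, `x ≠ 0`, `y ∉ q^ℤ`,
provided `ϑ(x;q) ≠ 0` and `ϑ(qx;q) ≠ 0`. -/
theorem appell_lerch_elliptic_transformation (q x y : ℂ)
    (hq0 : 0 < ‖q‖) (hq1 : ‖q‖ < 1)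
    (hx : x ≠ 0) (hy : ∀ n : ℤ, y ≠ q ^ n)
    (hθ : theta q x ≠ 0) (hθ' : theta q (q * x) ≠ 0) :
    appellLerch q (q * x) y = -x * y * appellLerch q x y - x :=
  appell_lerch_elliptic_transformation_general q x y hq0 hq1 hx hy hθ'
end

section
/- Let q ∈ ℂ with 0 < |q| < 1 and let y ∈ ℂ be such that y ≠ q^n for every n ∈ ℤ. If g : ℂ → ℂ is holomorphic on ℂ ∖ {0} and satisfies g(qx) = y·g(x) for all x ∈ ℂ ∖ {0}, then g(x) = 0 for all x ∈ ℂ ∖ {0}. (In geometric terms: the degree-zero line bundle L_y on the elliptic curve E_q = ℂ*/q^ℤ determined by the automorphy factor q^n ↦ y^n has no nonzero global sections when y ∉ q^ℤ.) -/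
/-!
Twisting `g` by `x ^ (-k)` multiplies the automorphy factor by `q ^ (-k)`, so one may assume
`‖q‖ < ‖y‖ ≤ 1` and `y ≠ 1`. Then `‖y‖ ≤ 1` makes `g` bounded near `0` (every point of the
punctured unit disc is `q ^ n` times a point of the compact annulus `‖q‖ ≤ ‖z‖ ≤ 1`), so `g` has a
removable singularity at `0`; its value `L` there satisfies `L = y L`, hence vanishes, and
`g x / x` is bounded near `0` as well. But `g x / x` has automorphy factor `y / q` of norm `> 1`,
and a bounded function with such a factor vanishes: `g x = y ^ (-n) g (q ^ n x) → 0`.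
-/

open Complex Filter Metric Set Topology

lemma exists_zpow_succ_lt_le {r s : ℝ} (hr0 : 0 < r) (hr1 : r < 1) (hs : 0 < s) :
    ∃ k : ℤ, r ^ (k + 1) < s ∧ s ≤ r ^ k := by
  obtain ⟨n, hn1, hn2⟩ := exists_mem_Ioc_zpow hs ((one_lt_inv₀ hr0).2 hr1)
  refine ⟨-(n + 1), ?_, ?_⟩
  · simpa [inv_zpow'] using hn1
  · simpa [inv_zpow'] using hn2

/-- `g` is a section of the line bundle on `ℂ^* / q ^ ℤ` with automorphy factor `y`. -/
def HasAutomorphyFactor (q y : ℂ) (g : ℂ → ℂ) : Prop :=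
  ∀ x, x ≠ 0 → g (q * x) = y * g x

namespace HasAutomorphyFactor

variable {q y : ℂ} {g : ℂ → ℂ}

lemma eq_zero_of_factor_eq_zero (h : HasAutomorphyFactor q 0 g) (hq : q ≠ 0) {x : ℂ}
    (hx : x ≠ 0) : g x = 0 := by
  simpa [mul_div_cancel₀ x hq] using h (x / q) (div_ne_zero hx hq)

lemma div_zpow (h : HasAutomorphyFactor q y g) (k : ℤ) :
    HasAutomorphyFactor q (y / q ^ k) (fun x => g x / x ^ k) := fun x hx => by
  simp only [mul_zpow, h x hx, div_mul_div_comm]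

lemma apply_pow_mul (h : HasAutomorphyFactor q y g) (hq : q ≠ 0) (n : ℕ) {x : ℂ} (hx : x ≠ 0) :
    g (q ^ n * x) = y ^ n * g x := by
  induction n with
  | zero => simp
  | succ n ih =>
    rw [pow_succ', mul_assoc, h _ (mul_ne_zero (pow_ne_zero n hq) hx), ih, pow_succ', mul_assoc]

lemma isBoundedUnder_of_norm_le_one (h : HasAutomorphyFactor q y g) (hq0 : 0 < ‖q‖)
    (hq1 : ‖q‖ < 1) (hy : ‖y‖ ≤ 1) (hg : ContinuousOn g {0}ᶜ) :
    IsBoundedUnder (· ≤ ·) (𝓝[≠] 0) (‖g ·‖) := by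
  have hq : q ≠ 0 := norm_pos_iff.mp hq0
  have hA : closedBall (0 : ℂ) 1 \ ball 0 ‖q‖ ⊆ {0}ᶜ := by
    rintro z ⟨-, hz⟩ rfl
    exact hz (mem_ball_self hq0)
  obtain ⟨M, hM⟩ := ((isCompact_closedBall 0 1).diff isOpen_ball).exists_bound_of_continuousOn
    (hg.mono hA)
  refine ⟨M, eventually_nhdsWithin_iff.2 <|
    Eventually.mono (ball_mem_nhds 0 one_pos) fun z hz1 hz0 => ?_⟩
  obtain ⟨n, hn1, hn2⟩ := exists_nat_pow_near_of_lt_one (norm_pos_iff.2 hz0)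
    (mem_ball_zero_iff.1 hz1).le hq0 hq1
  have hqn : 0 < ‖q‖ ^ n := pow_pos hq0 n
  have hw : z / q ^ n ∈ closedBall (0 : ℂ) 1 \ ball 0 ‖q‖ := by
    simp only [Set.mem_sdiff, mem_closedBall_zero_iff, mem_ball_zero_iff, norm_div, norm_pow,
      not_lt, div_le_one hqn, le_div_iff₀ hqn, ← pow_succ']
    exact ⟨hn2, hn1.le⟩
  calc ‖g z‖ = ‖y‖ ^ n * ‖g (z / q ^ n)‖ := by
        rw [← norm_pow, ← norm_mul, ← h.apply_pow_mul hq n (hA hw),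
          mul_div_cancel₀ z (pow_ne_zero n hq)]
    _ ≤ 1 * M := mul_le_mul (pow_le_one₀ (norm_nonneg y) hy) (hM _ hw) (norm_nonneg _) zero_le_one
    _ = M := one_mul M

lemma eq_zero_of_tendsto (h : HasAutomorphyFactor q y g) (hq : q ≠ 0) (hy : y ≠ 1) {L : ℂ}
    (hL : Tendsto g (𝓝[≠] 0) (𝓝 L)) : L = 0 := by
  have hmul : Tendsto (q * ·) (𝓝[≠] (0 : ℂ)) (𝓝[≠] 0) :=
    tendsto_nhdsWithin_iff.2
      ⟨((continuous_const_mul q).tendsto' 0 0 (mul_zero q)).mono_left nhdsWithin_le_nhds,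
        eventually_mem_nhdsWithin.mono fun x hx => mul_ne_zero hq hx⟩
  have hyL : Tendsto (fun x => y * g x) (𝓝[≠] 0) (𝓝 L) :=
    (hL.comp hmul).congr' (eventually_mem_nhdsWithin.mono fun x hx => h x hx)
  have : (1 - y) * L = 0 := by
    linear_combination tendsto_nhds_unique hyL (hL.const_mul y)
  exact (mul_eq_zero.1 this).resolve_left (sub_ne_zero.2 hy.symm)

lemma isBoundedUnder_div_id (h : HasAutomorphyFactor q y g) (hq : q ≠ 0) (hy : y ≠ 1)
    (hg : DifferentiableOn ℂ g {0}ᶜ) (hb : IsBoundedUnder (· ≤ ·) (𝓝[≠] 0) (‖g ·‖)) :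
    IsBoundedUnder (· ≤ ·) (𝓝[≠] 0) (fun x => ‖g x / x‖) := by
  have hd : ∀ᶠ z in 𝓝[≠] 0, DifferentiableAt ℂ g z := eventually_mem_nhdsWithin.mono
    fun z hz => hg.differentiableAt (isOpen_compl_singleton.mem_nhds hz)
  obtain ⟨M, hM⟩ := hb
  have hL := tendsto_limUnder_of_differentiable_on_punctured_nhds_of_bounded_under hd
    ⟨M + ‖g 0‖, eventually_map.2 <|
      (eventually_map.1 hM).mono fun z hz => norm_sub_le_of_le hz le_rfl⟩
  rw [h.eq_zero_of_tendsto hq hy hL] at hL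
  have hF : DifferentiableAt ℂ (Function.update g 0 0) 0 := by
    refine ((differentiableOn_compl_singleton_and_continuousAt_iff univ_mem).1
      ⟨?_, continuousAt_update_same.2 hL⟩).differentiableAt univ_mem
    exact (hg.mono fun z hz => hz.2).congr fun z hz => Function.update_of_ne hz.2 _ _
  refine ((continuousAt_dslope_same.2 hF).tendsto.mono_left nhdsWithin_le_nhds).norm
    |>.isBoundedUnder_le.mono_le (eventually_mem_nhdsWithin.mono fun x hx => le_of_eq ?_)
  dsimp only
  rw [dslope_of_ne _ hx, slope_def_field, Function.update_self, Function.update_of_ne hx,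
    sub_zero, sub_zero]

lemma eq_zero_of_one_lt_norm (h : HasAutomorphyFactor q y g) (hq : q ≠ 0) (hq1 : ‖q‖ < 1)
    (hy : 1 < ‖y‖) (hb : IsBoundedUnder (· ≤ ·) (𝓝[≠] 0) (‖g ·‖)) {x : ℂ} (hx : x ≠ 0) :
    g x = 0 := by
  obtain ⟨M, hM⟩ := hb
  have hlim : Tendsto (fun n : ℕ => q ^ n * x) atTop (𝓝[≠] 0) :=
    tendsto_nhdsWithin_iff.2
      ⟨by simpa using (tendsto_pow_atTop_nhds_zero_of_norm_lt_one hq1).mul_const x,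
        Eventually.of_forall fun n => mul_ne_zero (pow_ne_zero n hq) hx⟩
  have hbound : ∀ᶠ n in atTop, ‖g x‖ ≤ M * ‖y‖⁻¹ ^ n := (hlim.eventually hM).mono fun n hn => by
    have hyn : ‖y‖ ^ n * ‖g x‖ ≤ M := by
      simpa only [h.apply_pow_mul hq n hx, norm_mul, norm_pow, mem_ofPred_eq] using hn
    rwa [inv_pow, ← div_eq_mul_inv, le_div_iff₀ (by positivity), mul_comm]
  have hdecay : Tendsto (fun n : ℕ => M * ‖y‖⁻¹ ^ n) atTop (𝓝 0) := by
    simpa using (tendsto_pow_atTop_nhds_zero_of_lt_one (by positivity)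
      (inv_lt_one_of_one_lt₀ hy)).const_mul M
  exact norm_le_zero_iff.1 (ge_of_tendsto hdecay hbound)

end HasAutomorphyFactor

/-- For `0 < |q| < 1` and `y ∉ q^ℤ`, any function holomorphic on `ℂ ∖ {0}` satisfying
`g(qx) = y·g(x)` vanishes identically on `ℂ ∖ {0}`: the degree-zero line bundle `L_y`
on `E_q = ℂ*/q^ℤ` has no nonzero global sections. -/
theorem no_sections_degree_zero (q y : ℂ)
    (hq0 : 0 < ‖q‖) (hq1 : ‖q‖ < 1)
    (hy : ∀ n : ℤ, y ≠ q ^ n)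
    (g : ℂ → ℂ)
    (hg : ∀ x : ℂ, x ≠ 0 → DifferentiableAt ℂ g x)
    (heq : ∀ x : ℂ, x ≠ 0 → g (q * x) = y * g x) :
    ∀ x : ℂ, x ≠ 0 → g x = 0 := by
  have hq : q ≠ 0 := norm_pos_iff.mp hq0
  have hA : HasAutomorphyFactor q y g := heq
  rcases eq_or_ne y 0 with rfl | hy0
  · exact fun x => hA.eq_zero_of_factor_eq_zero hq
  obtain ⟨k, hk1, hk2⟩ := exists_zpow_succ_lt_le hq0 hq1 (norm_pos_iff.2 hy0)
  have hqk : 0 < ‖q‖ ^ k := zpow_pos hq0 k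
  have hAk : HasAutomorphyFactor q (y / q ^ k) (fun x => g x / x ^ k) := hA.div_zpow k
  have hyk1 : ‖y / q ^ k‖ ≤ 1 := by rwa [norm_div, norm_zpow, div_le_one hqk]
  have hqyk : ‖q‖ < ‖y / q ^ k‖ := by
    rwa [norm_div, norm_zpow, lt_div_iff₀ hqk, ← zpow_one_add₀ hq0.ne', add_comm]
  have hyk : y / q ^ k ≠ 1 := fun h => hy k ((div_eq_one_iff_eq (zpow_ne_zero k hq)).1 h)
  have hgk : DifferentiableOn ℂ (fun x => g x / x ^ k) {0}ᶜ := fun x hx =>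
    ((hg x hx).div (differentiableAt_zpow.2 (Or.inl hx)) (zpow_ne_zero k hx)).differentiableWithinAt
  have hbdd := hAk.isBoundedUnder_div_id hq hyk hgk
    (hAk.isBoundedUnder_of_norm_le_one hq0 hq1 hyk1 hgk.continuousOn)
  intro x hx
  have := (hAk.div_zpow 1).eq_zero_of_one_lt_norm hq hq1
    (by rwa [norm_div, zpow_one, one_lt_div hq0]) (by simpa only [zpow_one] using hbdd) hx
  simpa [hx, zpow_ne_zero] using this
end

section
/- Let q ∈ ℂ with 0 < |q| < 1 and let y ∈ ℂ be such that y ≠ q^n for every n ∈ ℤ. Then s(·,y;q) is the unique holomorphic solution of the theta difference equation: if g : ℂ → ℂ is holomorphic on ℂ ∖ {0} and satisfies g(qx) = y·g(x) + ϑ(x;q) for all x ∈ ℂ ∖ {0}, then g(x) = s(x, y; q) for all x ∈ ℂ ∖ {0}. -/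
open Filter Metric Topology

/-!
The difference `h = g - s(·, y; q)` of two solutions satisfies `h(qx) = y h(x)`; the convergence
of `s` and its own difference equation rest on the bound `‖q ^ n - y‖ ≥ c ‖q‖ ^ n`. Multiplying
`h` by `x ^ M` turns `y` into `ρ = y q ^ M`, and for large `M` we get `‖ρ‖ ≤ 1`. The new function
`H(qx) = ρ H(x)` is then bounded on the punctured unit disc, because every point there is `q ^ n`
times a point of the compact annulus `‖q‖ ≤ ‖x‖ ≤ 1`. So `H` extends to an entire function `F`
with `F(qx) = ρ F(x)`, and comparing Taylor coefficients at `0` gives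
`(q ^ k - ρ) F⁽ᵏ⁾(0) = 0`. Since `y ∉ q ^ ℤ`, `ρ ≠ q ^ k`, so `F = 0`.
-/

lemma summable_zpow_mul_pow_of_exponent_succ {a b : ℝ} (ha0 : 0 < a) (ha1 : a < 1) (hb : 0 < b)
    (c : ℤ) {e : ℕ → ℤ} (he : ∀ k, e (k + 1) = e k + k + c) :
    Summable fun k : ℕ => a ^ e k * b ^ k := by
  have hratio : ∀ k : ℕ,
      ‖a ^ e (k + 1) * b ^ (k + 1)‖ / ‖a ^ e k * b ^ k‖ = a ^ k * (a ^ c * b) := by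
    intro k
    rw [Real.norm_of_nonneg (by positivity), Real.norm_of_nonneg (by positivity), he,
      zpow_add₀ ha0.ne', zpow_add₀ ha0.ne', zpow_natCast, pow_succ]
    field_simp
  refine summable_of_ratio_test_tendsto_lt_one zero_lt_one
    (Eventually.of_forall fun k => by positivity) ?_
  simp only [hratio]
  simpa using (tendsto_pow_atTop_nhds_zero_of_lt_one ha0.le ha1).mul_const (a ^ c * b)

lemma summable_zpow_triangular_mul_zpow {a b : ℝ} (ha0 : 0 < a) (ha1 : a < 1) (hb : 0 < b) :
    Summable fun n : ℤ => a ^ (n * (n - 1) / 2) * b ^ n := by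
  refine Summable.of_nat_of_neg ?_ ?_
  · simpa using summable_zpow_mul_pow_of_exponent_succ ha0 ha1 hb 0
      (e := fun k => (k : ℤ) * (k - 1) / 2) fun k => by
        push_cast
        rw [show ((k : ℤ) + 1) * (k + 1 - 1) = k * (k - 1) + k * 2 by ring,
          Int.add_mul_ediv_right _ _ two_ne_zero, add_zero]
  · refine (summable_zpow_mul_pow_of_exponent_succ ha0 ha1 (inv_pos.2 hb) 1
      (e := fun k => -(k : ℤ) * (-k - 1) / 2) fun k => by
        push_cast
        rw [show -((k : ℤ) + 1) * (-(k + 1) - 1) = -k * (-k - 1) + (k + 1) * 2 by ring,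
          Int.add_mul_ediv_right _ _ two_ne_zero, add_assoc]).congr fun k => ?_
    simp [zpow_neg]

lemma zpow_le_zpow_add_zpow {s v t : ℝ} (hs : 0 < s) (hsv : s ≤ v) (hvt : v ≤ t) (n : ℤ) :
    v ^ n ≤ s ^ n + t ^ n := by
  rcases le_or_gt 0 n with hn | hn
  · linarith [zpow_le_zpow_left₀ hn (hs.le.trans hsv) hvt, zpow_pos hs n]
  · have : v ^ n ≤ s ^ n := by
      simpa [zpow_neg] using
        inv_anti₀ (zpow_pos hs _) (zpow_le_zpow_left₀ (neg_nonneg.2 hn.le) hs.le hsv)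
    linarith [zpow_pos (hs.trans_le (hsv.trans hvt)) n]

lemma exists_pos_forall_le_of_finite {α : Type*} {f : α → ℝ} (hf : ∀ a, 0 < f a) {ε : ℝ}
    (hε : 0 < ε) (hfin : {a | f a < ε}.Finite) : ∃ c > 0, ∀ a, c ≤ f a := by
  rcases Set.eq_empty_or_nonempty {a | f a < ε} with hempty | hne
  · exact ⟨ε, hε, fun a => not_lt.1 fun ha => hempty.subset ha⟩
  obtain ⟨a₀, -, hmin⟩ := Set.exists_min_image _ f hfin hne
  refine ⟨min ε (f a₀), lt_min hε (hf a₀), fun a => ?_⟩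
  by_cases ha : f a < ε
  · exact (min_le_right _ _).trans (hmin a ha)
  · exact (min_le_left _ _).trans (not_lt.1 ha)

lemma finite_setOf_le_zpow_le {a u : ℝ} (ha0 : 0 < a) (ha1 : a < 1) (hu : 0 < u) (v : ℝ) :
    {n : ℤ | u ≤ a ^ n ∧ a ^ n ≤ v}.Finite := by
  obtain ⟨N, hN⟩ := exists_pow_lt_of_lt_one hu ha1
  obtain ⟨M, hM⟩ := pow_unbounded_of_one_lt v ((one_lt_inv₀ ha0).2 ha1)
  refine (Set.finite_Icc (-(M : ℤ)) N).subset fun n ⟨hun, hnv⟩ => ⟨?_, ?_⟩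
  · by_contra! hn
    have : a ^ (-(M : ℤ)) < a ^ n := zpow_lt_zpow_right_of_lt_one₀ ha0 ha1 hn
    rw [zpow_neg, zpow_natCast, ← inv_pow] at this
    linarith
  · by_contra! hn
    have : a ^ n < a ^ (N : ℤ) := zpow_lt_zpow_right_of_lt_one₀ ha0 ha1 hn
    rw [zpow_natCast] at this
    linarith

lemma exists_pos_mul_zpow_le_norm_zpow_sub {q y : ℂ} (hq0 : 0 < ‖q‖) (hq1 : ‖q‖ < 1)
    (hy : ∀ n : ℤ, y ≠ q ^ n) : ∃ c > 0, ∀ n : ℤ, c * ‖q‖ ^ n ≤ ‖q ^ n - y‖ := by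
  rcases eq_or_ne y 0 with rfl | hy0
  · exact ⟨1, one_pos, fun n => by simp⟩
  -- `‖q ^ n - y‖ < ‖q ^ n‖ / 2` forces `‖q ^ n‖` to be comparable to `‖y‖`.
  have hfin : {n : ℤ | ‖q ^ n - y‖ / ‖q‖ ^ n < 1 / 2}.Finite := by
    refine (finite_setOf_le_zpow_le hq0 hq1 (by positivity : 0 < ‖y‖ / 2) (2 * ‖y‖)).subset
      fun n hn => ?_
    replace hn : ‖q ^ n - y‖ < 1 / 2 * ‖q‖ ^ n := (div_lt_iff₀ (zpow_pos hq0 n)).1 hn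
    have h₁ := norm_sub_norm_le (q ^ n) y
    have h₂ := norm_sub_norm_le y (q ^ n)
    rw [norm_sub_rev y, norm_zpow] at h₂
    rw [norm_zpow] at h₁
    constructor <;> linarith
  obtain ⟨c, hc, hcf⟩ := exists_pos_forall_le_of_finite
    (fun n => div_pos (norm_pos_iff.2 (sub_ne_zero.2 (hy n).symm)) (zpow_pos hq0 n))
    one_half_pos hfin
  exact ⟨c, hc, fun n => (le_div_iff₀ (zpow_pos hq0 n)).1 (hcf n)⟩

section Appell

variable {q y : ℂ}

lemma norm_appellS_summand_le {c : ℝ} (hc : 0 < c) (hcq : ∀ n : ℤ, c * ‖q‖ ^ n ≤ ‖q ^ n - y‖)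
    (hq0 : 0 < ‖q‖) (x : ℂ) (n : ℤ) :
    ‖q ^ (n * (n - 1) / 2) * (-x) ^ n / (q ^ n - y)‖ ≤
      c⁻¹ * (‖q‖ ^ (n * (n - 1) / 2) * (‖x‖ / ‖q‖) ^ n) := by
  rw [norm_div, norm_mul, norm_zpow, norm_zpow, norm_neg]
  calc ‖q‖ ^ (n * (n - 1) / 2) * ‖x‖ ^ n / ‖q ^ n - y‖
      ≤ ‖q‖ ^ (n * (n - 1) / 2) * ‖x‖ ^ n / (c * ‖q‖ ^ n) :=
        div_le_div_of_nonneg_left (by positivity) (by positivity) (hcq n)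
    _ = c⁻¹ * (‖q‖ ^ (n * (n - 1) / 2) * (‖x‖ / ‖q‖) ^ n) := by
        rw [div_zpow]
        field_simp

lemma summable_theta_summand (hq0 : 0 < ‖q‖) (hq1 : ‖q‖ < 1) {x : ℂ} (hx : x ≠ 0) :
    Summable fun n : ℤ => (-x) ^ n * q ^ (n * (n - 1) / 2) :=
  .of_norm <| (summable_zpow_triangular_mul_zpow hq0 hq1 (norm_pos_iff.2 hx)).congr fun n => by
    rw [norm_mul, norm_zpow, norm_zpow, norm_neg, mul_comm]

lemma summable_appellS_summand (hq0 : 0 < ‖q‖) (hq1 : ‖q‖ < 1) (hy : ∀ n : ℤ, y ≠ q ^ n)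
    {x : ℂ} (hx : x ≠ 0) :
    Summable fun n : ℤ => q ^ (n * (n - 1) / 2) * (-x) ^ n / (q ^ n - y) := by
  obtain ⟨c, hc, hcq⟩ := exists_pos_mul_zpow_le_norm_zpow_sub hq0 hq1 hy
  exact .of_norm_bounded
    ((summable_zpow_triangular_mul_zpow hq0 hq1 (by positivity)).mul_left c⁻¹)
    (norm_appellS_summand_le hc hcq hq0 x)

lemma appellS_mul_left (hq0 : 0 < ‖q‖) (hq1 : ‖q‖ < 1) (hy : ∀ n : ℤ, y ≠ q ^ n)
    {x : ℂ} (hx : x ≠ 0) : appellS q (q * x) y = y * appellS q x y + theta q x := by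
  have hsummand : ∀ n : ℤ, q ^ (n * (n - 1) / 2) * (-(q * x)) ^ n / (q ^ n - y) =
      y * (q ^ (n * (n - 1) / 2) * (-x) ^ n / (q ^ n - y)) + (-x) ^ n * q ^ (n * (n - 1) / 2) := by
    intro n
    have hqn : q ^ n - y ≠ 0 := sub_ne_zero.2 (hy n).symm
    rw [show -(q * x) = q * -x by ring, mul_zpow]
    field_simp
    ring
  rw [appellS, tsum_congr hsummand,
    ((summable_appellS_summand hq0 hq1 hy hx).mul_left y).tsum_add
      (summable_theta_summand hq0 hq1 hx), tsum_mul_left, appellS, theta]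

lemma differentiableAt_appellS (hq0 : 0 < ‖q‖) (hq1 : ‖q‖ < 1) (hy : ∀ n : ℤ, y ≠ q ^ n)
    {x : ℂ} (hx : x ≠ 0) : DifferentiableAt ℂ (fun z => appellS q z y) x := by
  obtain ⟨c, hc, hcq⟩ := exists_pos_mul_zpow_le_norm_zpow_sub hq0 hq1 hy
  set a := ‖q‖
  set r := ‖x‖ / 2
  set R := 2 * ‖x‖
  have hr : 0 < r := by positivity
  set U : Set ℂ := norm ⁻¹' Set.Ioo r R
  have hU : IsOpen U := isOpen_Ioo.preimage continuous_norm
  have hxU : x ∈ U := by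
    have := norm_pos_iff.2 hx
    simp only [U, r, R, Set.mem_preimage, Set.mem_Ioo]
    constructor <;> linarith
  have hsum : Summable fun n : ℤ =>
      c⁻¹ * (a ^ (n * (n - 1) / 2) * ((r / a) ^ n + (R / a) ^ n)) := by
    simp only [mul_add]
    exact ((summable_zpow_triangular_mul_zpow hq0 hq1 (by positivity)).mul_left c⁻¹).add
      ((summable_zpow_triangular_mul_zpow hq0 hq1 (by positivity)).mul_left c⁻¹)
  refine (Complex.differentiableOn_tsum_of_summable_norm hsum (fun n w hw => ?_) hU
    fun n w hw => ?_).differentiableAt (hU.mem_nhds hxU)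
  · have hw0 : -w ≠ 0 := neg_ne_zero.2 (norm_pos_iff.1 (hr.trans hw.1))
    exact (((differentiableAt_id.neg.zpow (Or.inl hw0)).const_mul _).div_const _)
      |>.differentiableWithinAt
  · refine (norm_appellS_summand_le hc hcq hq0 w n).trans ?_
    gcongr
    exact zpow_le_zpow_add_zpow (by positivity) (by gcongr; exact hw.1.le)
      (by gcongr; exact hw.2.le) n

end Appell

section Uniqueness

variable {E : Type*} [NormedAddCommGroup E] [NormedSpace ℂ E]

lemma bddAbove_norm_image_punctured_closedBall {q ρ : ℂ} (hq0 : 0 < ‖q‖) (hq1 : ‖q‖ < 1)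
    (hρ : ‖ρ‖ ≤ 1) {H : ℂ → E} (hH : ContinuousOn H {0}ᶜ)
    (hfe : ∀ z ≠ 0, H (q * z) = ρ • H z) :
    BddAbove (norm ∘ H '' (closedBall 0 1 \ {0})) := by
  set A := closedBall (0 : ℂ) 1 \ ball 0 ‖q‖
  have hA0 : A ⊆ {0}ᶜ := fun z hz h0 => hz.2 (Set.mem_singleton_iff.1 h0 ▸ mem_ball_self hq0)
  obtain ⟨M, hM⟩ := (isCompact_closedBall 0 1).diff isOpen_ball |>.exists_bound_of_continuousOn
    (hH.mono hA0)
  have hiter : ∀ n : ℕ, ∀ z ≠ 0, H (q ^ n * z) = ρ ^ n • H z := by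
    intro n
    induction n with
    | zero => simp
    | succ n ih =>
      intro z hz
      rw [pow_succ', mul_assoc, hfe _ (mul_ne_zero (pow_ne_zero _ (norm_pos_iff.1 hq0)) hz),
        ih z hz, pow_succ', mul_smul]
  -- Every `z` with `0 < ‖z‖ ≤ 1` is `q ^ n * w` with `n : ℕ` and `w` in the annulus `A`.
  refine ⟨M, ?_⟩
  rintro _ ⟨z, ⟨hz1, hz0⟩, rfl⟩
  obtain ⟨n, hn1, hn2⟩ := exists_nat_pow_near_of_lt_one (norm_pos_iff.2 hz0)
    (mem_closedBall_zero_iff.1 hz1) hq0 hq1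
  have hqn : q ^ n ≠ 0 := pow_ne_zero _ (norm_pos_iff.1 hq0)
  have hw : z / q ^ n ∈ A := by
    simp only [A, Set.mem_sdiff, mem_closedBall_zero_iff, mem_ball_zero_iff, not_lt, norm_div,
      norm_pow]
    rw [div_le_one (by positivity), le_div_iff₀ (by positivity), ← pow_succ']
    exact ⟨hn2, hn1.le⟩
  calc ‖H z‖ = ‖ρ‖ ^ n * ‖H (z / q ^ n)‖ := by
        rw [← norm_pow, ← norm_smul, ← hiter n _ (hA0 hw), mul_div_cancel₀ _ hqn]
    _ ≤ M := (mul_le_of_le_one_left (norm_nonneg _) (pow_le_one₀ (norm_nonneg _) hρ)).trans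
        (hM _ hw)

lemma exists_differentiable_eqOn_compl_singleton [CompleteSpace E] {f : ℂ → E} {c : ℂ}
    {s : Set ℂ} (hs : s ∈ 𝓝 c)
    (hd : DifferentiableOn ℂ f {c}ᶜ) (hb : BddAbove (norm ∘ f '' (s \ {c}))) :
    ∃ F : ℂ → E, Differentiable ℂ F ∧ Set.EqOn F f {c}ᶜ := by
  refine ⟨Function.update f c (limUnder (𝓝[≠] c) f), fun z => ?_,
    fun z hz => Function.update_of_ne hz _ _⟩
  rcases eq_or_ne z c with rfl | hz
  · exact (Complex.differentiableOn_update_limUnder_of_bddAbove hs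
      (hd.mono (Set.sdiff_subset_compl _ _)) hb).differentiableAt hs
  · exact (hd.differentiableAt (isOpen_compl_singleton.mem_nhds hz)).congr_of_eventuallyEq
      ((eventually_ne_nhds hz).mono fun w hw => Function.update_of_ne hw _ _)

lemma Differentiable.eq_zero_of_comp_mul_eq_smul [CompleteSpace E] {F : ℂ → E}
    (hF : Differentiable ℂ F) {q ρ : ℂ} (hρ : ∀ k : ℕ, ρ ≠ q ^ k)
    (hfe : ∀ z, F (q * z) = ρ • F z) : F = 0 := by
  -- Differentiating `k` times at `0` gives `q ^ k • F⁽ᵏ⁾(0) = ρ • F⁽ᵏ⁾(0)`.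
  have hderiv : ∀ k : ℕ, iteratedDeriv k F 0 = 0 := by
    intro k
    have h := congrFun (iteratedDeriv_comp_const_smul (n := k) hF.contDiff q) 0
    rw [funext hfe, iteratedDeriv_fun_const_smul_field, mul_zero, ← sub_eq_zero, ← sub_smul] at h
    exact (smul_eq_zero.1 h).resolve_left (sub_ne_zero.2 (hρ k))
  funext z
  rw [← Complex.taylorSeries_eq_of_entire hF 0 z]
  simp [hderiv]

lemma eqOn_zero_of_comp_mul_eq_smul [CompleteSpace E] {q y : ℂ} (hq0 : 0 < ‖q‖) (hq1 : ‖q‖ < 1)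
    (hy : ∀ n : ℤ, y ≠ q ^ n) {h : ℂ → E} (hd : DifferentiableOn ℂ h {0}ᶜ)
    (hfe : ∀ z ≠ 0, h (q * z) = y • h z) : Set.EqOn h 0 {0}ᶜ := by
  obtain ⟨M, hM⟩ := pow_unbounded_of_one_lt ‖y‖ ((one_lt_inv₀ hq0).2 hq1)
  set ρ := y * q ^ M
  have hρ : ‖ρ‖ ≤ 1 := by
    rw [norm_mul, norm_pow, ← le_div_iff₀ (by positivity), one_div, ← inv_pow]
    exact hM.le
  have hρq : ∀ k : ℕ, ρ ≠ q ^ k := fun k hk => hy (k - M) <| by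
    rw [zpow_sub₀ (norm_pos_iff.1 hq0), zpow_natCast, zpow_natCast, ← hk,
      mul_div_cancel_right₀ _ (pow_ne_zero _ (norm_pos_iff.1 hq0))]
  set H : ℂ → E := fun z => z ^ M • h z
  have hHd : DifferentiableOn ℂ H {0}ᶜ := (differentiableOn_id.pow M).smul hd
  have hHfe : ∀ z ≠ 0, H (q * z) = ρ • H z := fun z hz => by
    simp only [H, ρ, hfe z hz, smul_smul]
    ring_nf
  obtain ⟨F, hF, hFH⟩ := exists_differentiable_eqOn_compl_singleton (closedBall_mem_nhds 0 one_pos)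
    hHd (bddAbove_norm_image_punctured_closedBall hq0 hq1 hρ hHd.continuousOn hHfe)
  have hFfe : ∀ z, F (q * z) = ρ • F z := congrFun <|
    (hF.continuous.comp (continuous_const_mul q)).ext_on (dense_compl_singleton 0)
      (hF.continuous.const_smul ρ) fun z hz => by
        have hqz : q * z ≠ 0 := mul_ne_zero (norm_pos_iff.1 hq0) hz
        simp only [Function.comp_apply, hFH hz, hFH hqz, hHfe z hz]
  have hF0 := hF.eq_zero_of_comp_mul_eq_smul hρq hFfe
  intro z hz
  have hHz : H z = 0 := by rw [← hFH hz, hF0, Pi.zero_apply]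
  exact (smul_eq_zero.1 hHz).resolve_left (pow_ne_zero _ hz)

end Uniqueness

/-- Uniqueness: for `0 < |q| < 1` and `y ∉ q^ℤ`, any function holomorphic on `ℂ ∖ {0}`
satisfying the theta difference equation `g(qx) = y·g(x) + ϑ(x;q)` agrees with
`s(·,y;q)` on `ℂ ∖ {0}`. -/
theorem appell_lerch_unique_solution (q y : ℂ)
    (hq0 : 0 < ‖q‖) (hq1 : ‖q‖ < 1)
    (hy : ∀ n : ℤ, y ≠ q ^ n)
    (g : ℂ → ℂ)
    (hg : ∀ x : ℂ, x ≠ 0 → DifferentiableAt ℂ g x)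
    (heq : ∀ x : ℂ, x ≠ 0 → g (q * x) = y * g x + theta q x) :
    ∀ x : ℂ, x ≠ 0 → g x = appellS q x y := by
  intro x hx
  refine sub_eq_zero.1 (eqOn_zero_of_comp_mul_eq_smul hq0 hq1 hy (h := fun z => g z - appellS q z y)
    (fun z hz => ((hg z hz).sub (differentiableAt_appellS hq0 hq1 hy hz)).differentiableWithinAt)
    (fun z hz => ?_) hx)
  rw [smul_eq_mul, heq z hz, appellS_mul_left hq0 hq1 hy hz]
  ring
end

section
/- Let q ∈ ℂ with 0 < |q| < 1. There is no function g : ℂ → ℂ, holomorphic on ℂ ∖ {0}, such that g(qx) − g(x) = ϑ(x;q) for all x ∈ ℂ ∖ {0}. (This is the case y = 1 of the non-splitness of the extension defining the universal N=2 curve, proved by considering Laurent expansions around 0.) -/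
/-!
The circle average `(2π)⁻¹ ∫ f(R e^{iθ}) dθ` picks out the constant Laurent coefficient.
For `ϑ(·;q)` this coefficient is `1`. On the other hand, if `g` is holomorphic on `ℂ ∖ {0}`
its circle average does not depend on the radius (Cauchy on an annulus), and averaging `g(q·)`
over the unit circle is averaging `g` over the circle of radius `|q|`; so `g(qx) − g(x)` has
average `0`.
-/

open Complex Metric Real

theorem circleAverage_eq_of_differentiableOn_compl_singleton {E : Type*}
    [NormedAddCommGroup E] [NormedSpace ℂ E] [CompleteSpace E] {f : ℂ → E} {c : ℂ} {r R : ℝ}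
    (hf : DifferentiableOn ℂ f {c}ᶜ) (hr : 0 < r) (hR : 0 < R) :
    circleAverage f c r = circleAverage f c R := by
  wlog hrR : r ≤ R generalizing r R
  · exact (this hR hr (le_of_not_ge hrR)).symm
  have hdiff : DifferentiableOn ℂ (fun z ↦ (z - c)⁻¹ • f z) {c}ᶜ := fun z hz ↦
    ((differentiableAt_id.sub_const c).inv (sub_ne_zero.2 hz)).smul
      (hf.differentiableAt (isOpen_compl_singleton.mem_nhds hz)) |>.differentiableWithinAt
  have hne : ∀ z ∉ ball c r, z ≠ c := fun z hz h ↦ hz (h ▸ mem_ball_self hr)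
  rw [circleAverage_eq_circleIntegral hr.ne', circleAverage_eq_circleIntegral hR.ne',
    circleIntegral_eq_of_differentiable_on_annulus_off_countable hr hrR Set.countable_empty]
  · exact hdiff.continuousOn.mono fun z hz ↦ hne z hz.2
  · exact fun z hz ↦ hdiff.differentiableAt (isOpen_compl_singleton.mem_nhds
      (hne z fun h ↦ hz.1.2 (ball_subset_closedBall h)))

theorem circleAverage_comp_mul_left {E : Type*} [NormedAddCommGroup E] [NormedSpace ℝ E]
    (f : ℂ → E) (a : ℂ) (R : ℝ) :
    circleAverage (fun z ↦ f (a * z)) 0 R = circleAverage f 0 (‖a‖ * R) := by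
  have hrot (θ : ℝ) : a * circleMap 0 R θ = circleMap 0 (‖a‖ * R) (θ + arg a) := by
    simp only [circleMap, zero_add, ofReal_mul, ofReal_add, add_mul, Complex.exp_add]
    nth_rewrite 1 [← norm_mul_exp_arg_mul_I a]
    ring
  simp only [circleAverage_eq_integral_add (arg a) (f := f), circleAverage_def, hrot]

theorem circleAverage_zpow_of_ne_zero {n : ℤ} (hn : n ≠ 0) {R : ℝ} (hR : 0 < R) :
    circleAverage (· ^ n) (0 : ℂ) R = 0 := by
  rw [circleAverage_eq_circleIntegral hR.ne', smul_eq_zero]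
  right
  calc (∮ z in C(0, R), (z - 0)⁻¹ • z ^ n) = ∮ z in C(0, R), (z - 0) ^ (n - 1) :=
        circleIntegral.integral_congr hR.le fun z hz ↦ by
          have hz0 : z ≠ 0 := ne_zero_of_mem_sphere hR.ne' ⟨z, hz⟩
          simp [zpow_sub_one₀ hz0, mul_comm]
    _ = 0 := circleIntegral.integral_sub_zpow_of_ne (by omega) _ _ _

theorem circleAverage_tsum_mul_zpow {a : ℤ → ℂ} {R : ℝ} (hR : 0 < R)
    (ha : Summable fun n ↦ ‖a n‖ * R ^ n) :
    circleAverage (fun z ↦ ∑' n, a n * z ^ n) 0 R = a 0 := by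
  have hnorm (n : ℤ) (θ : ℝ) : ‖a n * circleMap 0 R θ ^ n‖ = ‖a n‖ * R ^ n := by
    simp [norm_zpow, abs_of_pos hR]
  have hsum : HasSum (fun n ↦ ∫ θ in 0..2 * π, a n * circleMap 0 R θ ^ n)
      (∫ θ in 0..2 * π, ∑' n, a n * circleMap 0 R θ ^ n) := by
    refine intervalIntegral.hasSum_integral_of_dominated_convergence (fun n _ ↦ ‖a n‖ * R ^ n)
      (fun n ↦ ?_) (fun n ↦ .of_forall fun θ _ ↦ (hnorm n θ).le) (.of_forall fun _ _ ↦ ha)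
      intervalIntegrable_const (.of_forall fun θ _ ↦ ?_)
    · exact (continuous_const.mul ((continuous_circleMap 0 R).zpow₀ n fun θ ↦
        .inl (circleMap_ne_center hR.ne'))).aestronglyMeasurable
    · exact (Summable.of_norm (by simpa only [hnorm] using ha)).hasSum
  have hterm (n : ℤ) : (2 * π)⁻¹ • ∫ θ in 0..2 * π, a n * circleMap 0 R θ ^ n =
      if n = 0 then a 0 else 0 := by
    change circleAverage (fun z ↦ a n • z ^ n) 0 R = _
    rw [circleAverage_fun_smul, smul_eq_mul]
    split_ifs with hn
    · simp [hn, circleAverage_const]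
    · simp [circleAverage_zpow_of_ne_zero hn hR]
  rw [circleAverage_def]
  exact (hsum.const_smul _).unique (by simpa only [hterm] using hasSum_ite_eq (0 : ℤ) (a 0))

theorem abs_sub_one_le_mul_sub_one_div_two (n : ℤ) : |n| - 1 ≤ n * (n - 1) / 2 := by
  rw [Int.le_ediv_iff_mul_le two_pos]
  rcases le_or_gt 0 n with h | h
  · rw [abs_of_nonneg h]
    rcases le_or_gt n 1 with h1 | h1 <;> nlinarith
  · rw [abs_of_neg h]
    nlinarith

theorem summable_zpow_mul_sub_one_div_two {a : ℝ} (h0 : 0 < a) (h1 : a < 1) :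
    Summable fun n : ℤ ↦ a ^ (n * (n - 1) / 2) := by
  have hgeom : Summable fun n : ℤ ↦ a⁻¹ * a ^ n.natAbs :=
    .mul_left _ <| .of_nat_of_neg (by simpa using summable_geometric_of_lt_one h0.le h1)
      (by simpa using summable_geometric_of_lt_one h0.le h1)
  refine .of_nonneg_of_le (fun n ↦ zpow_nonneg h0.le _) (fun n ↦ ?_) hgeom
  calc a ^ (n * (n - 1) / 2) ≤ a ^ (|n| - 1) :=
        zpow_le_zpow_right_of_le_one₀ h0 h1.le (abs_sub_one_le_mul_sub_one_div_two n)
    _ = a⁻¹ * a ^ n.natAbs := by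
        rw [Int.abs_eq_natAbs, zpow_sub_one₀ h0.ne', zpow_natCast, mul_comm]

theorem theta_eq_tsum_mul_zpow (q x : ℂ) :
    theta q x = ∑' n : ℤ, (-1) ^ n * q ^ (n * (n - 1) / 2) * x ^ n := by
  simp only [theta, neg_eq_neg_one_mul x, mul_zpow]
  congr 1 with n
  ring

theorem circleAverage_theta {q : ℂ} (hq0 : 0 < ‖q‖) (hq1 : ‖q‖ < 1) :
    circleAverage (theta q) 0 1 = 1 := by
  rw [funext (theta_eq_tsum_mul_zpow q), circleAverage_tsum_mul_zpow one_pos]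
  · simp
  · simpa [norm_zpow] using summable_zpow_mul_sub_one_div_two hq0 hq1

theorem circleAverage_comp_mul_sub_eq_zero {g : ℂ → ℂ} (hg : DifferentiableOn ℂ g {0}ᶜ) {q : ℂ}
    (hq : q ≠ 0) {R : ℝ} (hR : 0 < R) :
    circleAverage (fun z ↦ g (q * z) - g z) 0 R = 0 := by
  have hgq : DifferentiableOn ℂ (fun z ↦ g (q * z)) {0}ᶜ :=
    hg.comp (differentiableOn_id.const_mul q) fun z hz ↦ mul_ne_zero hq hz
  have hint {f : ℂ → ℂ} (hf : DifferentiableOn ℂ f {0}ᶜ) : CircleIntegrable f 0 R :=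
    (hf.continuousOn.mono fun z hz ↦ ne_of_mem_sphere hz (abs_pos.2 hR.ne').ne').circleIntegrable'
  rw [circleAverage_fun_sub (hint hgq) (hint hg), circleAverage_comp_mul_left,
    circleAverage_eq_of_differentiableOn_compl_singleton hg (mul_pos (norm_pos_iff.2 hq) hR) hR,
    sub_self]

/-- For `0 < |q| < 1`, there is no function holomorphic on `ℂ ∖ {0}` satisfying
`g(qx) − g(x) = ϑ(x;q)` for all `x ≠ 0` (the case `y = 1` of the non-splitness of the
extension defining the universal `N=2` curve). -/
theorem no_solution_y_eq_one (q : ℂ)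
    (hq0 : 0 < ‖q‖) (hq1 : ‖q‖ < 1) :
    ¬ ∃ g : ℂ → ℂ, (∀ x : ℂ, x ≠ 0 → DifferentiableAt ℂ g x) ∧
      (∀ x : ℂ, x ≠ 0 → g (q * x) - g x = theta q x) := by
  rintro ⟨g, hg, hfe⟩
  have hfe_sphere : Set.EqOn (fun z ↦ g (q * z) - g z) (theta q) (sphere 0 |1|) :=
    fun z hz ↦ hfe z (ne_of_mem_sphere hz (by norm_num))
  have hzero := circleAverage_comp_mul_sub_eq_zero (fun x hx ↦ (hg x hx).differentiableWithinAt)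
    (norm_pos_iff.1 hq0) one_pos
  rw [circleAverage_congr_sphere hfe_sphere, circleAverage_theta hq0 hq1] at hzero
  exact one_ne_zero hzero
end

section
/- Let q ∈ ℂ with 0 < |q| < 1 and let y ∈ ℂ with y ≠ 0. There is no function h : ℂ → ℂ, holomorphic on ℂ ∖ {0}, such that h(qx) = −x·y·h(x) − x for all x ∈ ℂ ∖ {0}. (Equivalently: for every point y of the dual elliptic curve E^∨ = ℂ*/q^ℤ, the extension 𝒪 → 𝒦_y → Θ·L_y^{−1} of line bundles on the elliptic curve E_q = ℂ*/q^ℤ defined by the automorphy factor [[−xy, −x],[0,1]] is non-split, so the corresponding odd deformation of the N=2 curve (E_q | Θ·L_y^{−1}) is nontrivial.) -/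
/-!
Iterating `h(qx) = −x(y h(x) + 1)` spreads a bound for `h` on one annulus `|q| r ≤ |x| ≤ r` to the
whole punctured disc `0 < |x| ≤ r` once `r` is small, and iterating the solved form
`h(x) = −(h(qx) + x)/(xy)` does the same near `∞`. By the removable singularity theorem `h`
extends to an entire function with a finite limit at `∞`, hence is constant by Liouville; but no
constant solves the functional equation.
-/

open Filter Function Bornology Metric
open scoped Topology

section Propagation

variable {E : Type*} [NormedAddCommGroup E] {g : ℂ → E} {q : ℂ}

theorem exists_norm_le_on_annulus (hg : ContinuousOn g {0}ᶜ) {r₁ : ℝ} (hr₁ : 0 < r₁) (r₂ : ℝ) :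
    ∃ C, ∀ z : ℂ, r₁ ≤ ‖z‖ → ‖z‖ ≤ r₂ → ‖g z‖ ≤ C := by
  have hsub : closedBall (0 : ℂ) r₂ \ ball 0 r₁ ⊆ {0}ᶜ := fun z hz h0 => by
    obtain rfl := h0
    simp at hz
    linarith [hz.2]
  obtain ⟨C, hC⟩ := (isCompact_closedBall (0 : ℂ) r₂).diff isOpen_ball
    |>.exists_bound_of_continuousOn (hg.mono hsub)
  exact ⟨C, fun z h₁ h₂ => hC z (by simpa using And.intro h₂ h₁)⟩

theorem norm_le_of_le_on_annulus_of_le_comp_mul (hq₀ : 0 < ‖q‖) (hq₁ : ‖q‖ < 1) {r C : ℝ}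
    (hann : ∀ z : ℂ, ‖q‖ * r ≤ ‖z‖ → ‖z‖ ≤ r → ‖g z‖ ≤ C)
    (hstep : ∀ z : ℂ, z ≠ 0 → ‖z‖ ≤ r → ‖g z‖ ≤ C → ‖g (q * z)‖ ≤ C)
    {z : ℂ} (hz : z ≠ 0) (hzr : ‖z‖ ≤ r) : ‖g z‖ ≤ C := by
  have hq : q ≠ 0 := norm_pos_iff.mp hq₀
  have hr : 0 < r := (norm_pos_iff.mpr hz).trans_le hzr
  have hlayers : ∀ n : ℕ, ∀ z : ℂ, ‖q‖ ^ (n + 1) * r ≤ ‖z‖ → ‖z‖ ≤ r → ‖g z‖ ≤ C := by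
    intro n
    induction n with
    | zero => simpa using hann
    | succ n ih =>
      intro z h₁ h₂
      rcases le_or_gt (‖q‖ * r) ‖z‖ with hz' | hz'
      · exact hann z hz' h₂
      have hzq : ‖z / q‖ = ‖z‖ / ‖q‖ := norm_div z q
      have h₁' : ‖q‖ ^ (n + 1) * r ≤ ‖z / q‖ := by
        rw [hzq, le_div_iff₀ hq₀]
        calc ‖q‖ ^ (n + 1) * r * ‖q‖ = ‖q‖ ^ (n + 1 + 1) * r := by ring
          _ ≤ ‖z‖ := h₁
      have h₂' : ‖z / q‖ ≤ r := by
        rw [hzq, div_le_iff₀ hq₀]; linarith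
      have hzq0 : z / q ≠ 0 := by
        rw [← norm_pos_iff]; exact (by positivity : 0 < ‖q‖ ^ (n + 1) * r).trans_le h₁'
      simpa [mul_div_cancel₀ z hq] using hstep (z / q) hzq0 h₂' (ih _ h₁' h₂')
  obtain ⟨n, hn⟩ := exists_pow_lt_of_lt_one (div_pos (norm_pos_iff.mpr hz) hr) hq₁
  refine hlayers n z ?_ hzr
  calc ‖q‖ ^ (n + 1) * r ≤ ‖q‖ ^ n * r :=
        mul_le_mul_of_nonneg_right (pow_le_pow_of_le_one hq₀.le hq₁.le n.le_succ) hr.le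
    _ ≤ ‖z‖ := ((lt_div_iff₀ hr).mp hn).le

theorem isBoundedUnder_norm_nhdsNE_zero_of_norm_comp_mul_le (hq₀ : 0 < ‖q‖) (hq₁ : ‖q‖ < 1)
    (hg : ContinuousOn g {0}ᶜ) {α β : ℝ} (hα : 0 ≤ α)
    (hstep : ∀ z : ℂ, z ≠ 0 → ‖z‖ ≤ 1 → ‖g (q * z)‖ ≤ α * ‖z‖ * ‖g z‖ + β) :
    IsBoundedUnder (· ≤ ·) (𝓝[≠] 0) fun z => ‖g z‖ := by
  set r : ℝ := 1 / (2 * α + 2)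
  have hr : 0 < r := by positivity
  have hr₁ : r ≤ 1 := by rw [div_le_one (by positivity)]; linarith
  have hαr : α * r ≤ 1 / 2 := by rw [mul_one_div, div_le_iff₀ (by positivity)]; linarith
  obtain ⟨M, hM⟩ := exists_norm_le_on_annulus hg (mul_pos hq₀ hr) r
  set C := max M (2 * β)
  have hstepC : ∀ z : ℂ, z ≠ 0 → ‖z‖ ≤ r → ‖g z‖ ≤ C → ‖g (q * z)‖ ≤ C := by
    intro z hz hzr hgz
    have : α * ‖z‖ * ‖g z‖ ≤ α * r * ‖g z‖ := by gcongr
    have : α * r * ‖g z‖ ≤ 1 / 2 * ‖g z‖ := by gcongr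
    linarith [hstep z hz (hzr.trans hr₁), le_max_right M (2 * β)]
  refine isBoundedUnder_of_eventually_le (a := C) ?_
  filter_upwards [inter_mem_nhdsWithin _ (closedBall_mem_nhds 0 hr)] with z ⟨hz, hzr⟩
  exact norm_le_of_le_on_annulus_of_le_comp_mul hq₀ hq₁
    (fun z h₁ h₂ => (hM z h₁ h₂).trans (le_max_left _ _)) hstepC hz (by simpa using hzr)

end Propagation

section Removable

variable {E : Type*} [NormedAddCommGroup E] [NormedSpace ℂ E] [CompleteSpace E] {g : ℂ → E}

theorem exists_tendsto_nhdsNE_zero_of_norm_comp_mul_le {q : ℂ} (hq₀ : 0 < ‖q‖) (hq₁ : ‖q‖ < 1)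
    (hg : ∀ z : ℂ, z ≠ 0 → DifferentiableAt ℂ g z) {α β : ℝ} (hα : 0 ≤ α)
    (hstep : ∀ z : ℂ, z ≠ 0 → ‖z‖ ≤ 1 → ‖g (q * z)‖ ≤ α * ‖z‖ * ‖g z‖ + β) :
    ∃ L, Tendsto g (𝓝[≠] 0) (𝓝 L) := by
  obtain ⟨C, hC⟩ := isBoundedUnder_norm_nhdsNE_zero_of_norm_comp_mul_le hq₀ hq₁
    (fun z hz => (hg z hz).continuousAt.continuousWithinAt) hα hstep
  refine ⟨_, Complex.tendsto_limUnder_of_differentiable_on_punctured_nhds_of_bounded_under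
    (eventually_nhdsWithin_of_forall hg) ⟨C + ‖g 0‖, eventually_map.2 ?_⟩⟩
  filter_upwards [eventually_map.1 hC] with z hz
  exact (norm_sub_le _ _).trans (by simpa using hz)

theorem differentiable_update_zero_of_tendsto (hg : ∀ z : ℂ, z ≠ 0 → DifferentiableAt ℂ g z)
    {L : E} (hL : Tendsto g (𝓝[≠] 0) (𝓝 L)) : Differentiable ℂ (update g 0 L) := by
  intro z
  rcases eq_or_ne z 0 with rfl | hz
  · refine (Complex.analyticAt_of_differentiable_on_punctured_nhds_of_continuousAt ?_
      (continuousAt_update_same.mpr hL)).differentiableAt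
    filter_upwards [self_mem_nhdsWithin] with w hw
    exact (hg w hw).congr_of_eventuallyEq <|
      (eventually_ne_nhds hw).mono fun v hv => update_of_ne hv _ _
  · exact (hg z hz).congr_of_eventuallyEq <|
      (eventually_ne_nhds hz).mono fun v hv => update_of_ne hv _ _

end Removable

theorem norm_comp_mul_le_of_functional_eq {h : ℂ → ℂ} {q y : ℂ}
    (heq : ∀ x : ℂ, x ≠ 0 → h (q * x) = -x * y * h x - x) {z : ℂ} (hz : z ≠ 0) (hz₁ : ‖z‖ ≤ 1) :
    ‖h (q * z)‖ ≤ ‖y‖ * ‖z‖ * ‖h z‖ + 1 := by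
  rw [heq z hz]
  calc ‖-z * y * h z - z‖ ≤ ‖-z * y * h z‖ + ‖z‖ := norm_sub_le _ _
    _ ≤ ‖y‖ * ‖z‖ * ‖h z‖ + 1 := by rw [norm_mul, norm_mul, norm_neg]; linarith

theorem functional_eq_comp_inv {h : ℂ → ℂ} {q y : ℂ} (hq : q ≠ 0) (hy : y ≠ 0)
    (heq : ∀ x : ℂ, x ≠ 0 → h (q * x) = -x * y * h x - x) {z : ℂ} (hz : z ≠ 0) :
    h (q * z)⁻¹ = -(q * z * h z⁻¹ + 1) / y := by
  set w := (q * z)⁻¹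
  have hw : q * z * w = 1 := mul_inv_cancel₀ (mul_ne_zero hq hz)
  have e := heq w (inv_ne_zero (mul_ne_zero hq hz))
  rw [show q * w = z⁻¹ by simp only [w]; field_simp] at e
  rw [eq_div_iff hy]
  linear_combination (q * z) * e - (y * h w + 1) * hw

theorem norm_comp_inv_mul_le_of_functional_eq {h : ℂ → ℂ} {q y : ℂ} (hq : q ≠ 0) (hy : y ≠ 0)
    (heq : ∀ x : ℂ, x ≠ 0 → h (q * x) = -x * y * h x - x) {z : ℂ} (hz : z ≠ 0) :
    ‖h (q * z)⁻¹‖ ≤ ‖q‖ / ‖y‖ * ‖z‖ * ‖h z⁻¹‖ + 1 / ‖y‖ := by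
  rw [functional_eq_comp_inv hq hy heq hz, norm_div, norm_neg]
  calc ‖q * z * h z⁻¹ + 1‖ / ‖y‖ ≤ (‖q * z * h z⁻¹‖ + 1) / ‖y‖ := by
        gcongr; simpa using norm_add_le (q * z * h z⁻¹) 1
    _ = ‖q‖ / ‖y‖ * ‖z‖ * ‖h z⁻¹‖ + 1 / ‖y‖ := by rw [norm_mul, norm_mul]; ring

theorem not_forall_const_functional_eq (y c : ℂ) : ¬ ∀ x : ℂ, x ≠ 0 → c = -x * y * c - x := by
  intro hc
  have h₁ := hc 1 one_ne_zero
  have h₂ := hc 2 two_ne_zero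
  exact one_ne_zero (α := ℂ) (by linear_combination (-1 - 2 * y) * h₁ + (1 + y) * h₂)

/-- For `0 < |q| < 1` and `y ≠ 0`, there is no function holomorphic on `ℂ ∖ {0}`
satisfying `h(qx) = −x·y·h(x) − x`: the extension `𝒪 → 𝒦_y → Θ·L_y⁻¹` of line bundles
on `E_q = ℂ*/q^ℤ` given by the automorphy factor `[[−xy, −x],[0,1]]` is non-split, so
the corresponding odd deformation of the `N=2` curve `(E_q | Θ·L_y⁻¹)` is nontrivial. -/
theorem extension_non_split (q y : ℂ)
    (hq0 : 0 < ‖q‖) (hq1 : ‖q‖ < 1) (hy : y ≠ 0) :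
    ¬ ∃ h : ℂ → ℂ, (∀ x : ℂ, x ≠ 0 → DifferentiableAt ℂ h x) ∧
      (∀ x : ℂ, x ≠ 0 → h (q * x) = -x * y * h x - x) := by
  rintro ⟨h, hd, heq⟩
  have hq : q ≠ 0 := norm_pos_iff.mp hq0
  obtain ⟨L₀, hL₀⟩ := exists_tendsto_nhdsNE_zero_of_norm_comp_mul_le hq0 hq1 hd (norm_nonneg y)
    fun z hz hz₁ => norm_comp_mul_le_of_functional_eq heq hz hz₁
  obtain ⟨L, hL⟩ := exists_tendsto_nhdsNE_zero_of_norm_comp_mul_le (g := fun u => h u⁻¹) hq0 hq1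
    (fun z hz => (hd _ (inv_ne_zero hz)).comp z (differentiableAt_inv hz)) (by positivity)
    fun z hz _ => norm_comp_inv_mul_le_of_functional_eq hq hy heq hz
  have hL_inf : Tendsto (update h 0 L₀) (cocompact ℂ) (𝓝 L) := by
    rw [← cobounded_eq_cocompact]
    refine (hL.comp tendsto_inv₀_cobounded').congr' ?_
    filter_upwards [eventually_ne_cobounded 0] with x hx
    simp [update_of_ne hx]
  have hconst := (differentiable_update_zero_of_tendsto hd hL₀).eq_const_of_tendsto_cocompact hL_inf
  have hh : ∀ x : ℂ, x ≠ 0 → h x = L := fun x hx => by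
    simpa [update_of_ne hx] using congrFun hconst x
  refine not_forall_const_functional_eq y L fun x hx => ?_
  have e := heq x hx
  rwa [hh x hx, hh (q * x) (mul_ne_zero hq hx)] at e
end

section
/- Let q ∈ ℂ with 0 < |q| < 1. If f : ℂ × ℂ → ℂ is holomorphic on (ℂ ∖ {0}) × (ℂ ∖ {0}) and satisfies both f(qx, y) = −(x·y)^{−1}·f(x, y) and f(x, qy) = −(x·y)^{−1}·f(x, y) for all x, y ∈ ℂ ∖ {0}, then there exists c ∈ ℂ such that f(x, y) = c·ϑ(x·y; q) for all x, y ∈ ℂ ∖ {0}. (In geometric terms: the space of global sections H^0(E × E^∨, Θ(xy)) of the line bundle Θ(xy) on the product of the elliptic curve E_q = ℂ*/q^ℤ and its dual is one-dimensional.) -/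
/-!
Every function holomorphic on `ℂ*` splits, by Cauchy integrals over an inner and an outer circle,
as `P z + z⁻¹ * R z⁻¹` with `P` and `R` entire. Such a sum vanishes identically only if
`P = R = 0`: each of `P`, `R` then tends to `0` at infinity, so Liouville applies.

Hence a functional equation for `g = P + z⁻¹ R(z⁻¹)` can be split into one for `P` and one for
`R`. For `g(qz) = -z⁻¹ g(z)` these read `P z = P 0 - z P(qz)` and `R u = -q P 0 - q² u R(qu)`;
iterating them (`|q| < 1`) yields the nonnegative and the negative half of the series
`P 0 * ϑ(z; q)`. For a `q`-invariant function they make `P` constant and `R = 0`.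

In two variables, `t ↦ f(t, s/t)` is `q`-invariant since the factors `-(xy)⁻¹` of the two
functional equations cancel; so `f(x, y) = f(xy, 1)`, reducing the theorem to one variable.
-/

open Complex Metric Set Filter Bornology
open scoped Real Topology

lemma Differentiable.dslope {f : ℂ → ℂ} (hf : Differentiable ℂ f) (c : ℂ) :
    Differentiable ℂ (dslope f c) := by
  rw [← differentiableOn_univ]
  exact (differentiableOn_dslope univ_mem).mpr hf.differentiableOn

noncomputable def circleCauchy (g : ℂ → ℂ) (R : ℝ) (z : ℂ) : ℂ :=
  (2 * π * I)⁻¹ • ∮ w in C(0, R), (w - z)⁻¹ • g w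

section Laurent

variable {g : ℂ → ℂ}

lemma continuousOn_sphere_zero (hg : ∀ w, w ≠ 0 → DifferentiableAt ℂ g w) {R : ℝ} (hR : 0 < R) :
    ContinuousOn g (sphere 0 R) := fun w hw =>
  (hg w (ne_zero_of_mem_sphere hR.ne' ⟨w, hw⟩)).continuousAt.continuousWithinAt

lemma circleCauchy_eq_of_forall_ne (hg : ∀ w, w ≠ 0 → DifferentiableAt ℂ g w) {z : ℂ}
    {r₁ r₂ : ℝ} (hr₁ : 0 < r₁) (hr : r₁ ≤ r₂) (hz : ∀ w, r₁ ≤ ‖w‖ → ‖w‖ ≤ r₂ → w ≠ z) :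
    circleCauchy g r₁ z = circleCauchy g r₂ z := by
  have hd : ∀ w ∈ closedBall 0 r₂ \ ball 0 r₁,
      DifferentiableAt ℂ (fun w => (w - z)⁻¹ • g w) w := by
    rintro w ⟨hw₂, hw₁⟩
    rw [mem_closedBall_zero_iff] at hw₂
    rw [mem_ball_zero_iff, not_lt] at hw₁
    exact ((differentiableAt_id.sub_const z).inv (sub_ne_zero.mpr (hz w hw₁ hw₂))).smul
      (hg w (norm_pos_iff.mp (hr₁.trans_le hw₁)))
  unfold circleCauchy
  rw [circleIntegral_eq_of_differentiable_on_annulus_off_countable hr₁ hr countable_empty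
    (fun w hw => (hd w hw).continuousAt.continuousWithinAt)
    (fun w hw => hd w (sdiff_subset_sdiff ball_subset_closedBall ball_subset_closedBall hw.1))]

lemma eq_circleCauchy_sub_circleCauchy (hg : ∀ w, w ≠ 0 → DifferentiableAt ℂ g w) {z : ℂ}
    {r R : ℝ} (hr : 0 < r) (hrz : r < ‖z‖) (hzR : ‖z‖ < R) :
    g z = circleCauchy g R z - circleCauchy g r z := by
  have hgz := hg z (norm_pos_iff.mp (hr.trans hrz))
  -- Cauchy–Goursat on the annulus for the difference quotient, which is holomorphic at `z` too.
  have hgoursat : (∮ w in C(0, R), dslope g z w) = ∮ w in C(0, r), dslope g z w := by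
    refine circleIntegral_eq_of_differentiable_on_annulus_off_countable hr
      (hrz.trans hzR).le (countable_singleton z) (fun w hw => ?_) (fun w hw => ?_)
    · have hw0 : w ≠ 0 := by
        rintro rfl
        exact hw.2 (mem_ball_self hr)
      obtain rfl | hwz := eq_or_ne w z
      · exact (continuousAt_dslope_same.mpr hgz).continuousWithinAt
      · exact ((continuousAt_dslope_of_ne hwz).mpr
          (hg w hw0).continuousAt).continuousWithinAt
    · have hw0 : w ≠ 0 := by
        rintro rfl
        exact hw.1.2 (mem_closedBall_self hr.le)
      exact (differentiableAt_dslope_of_ne hw.2).mpr (hg w hw0)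
  have hsplit : ∀ ρ, 0 < ρ → ‖z‖ ≠ ρ → (∮ w in C(0, ρ), dslope g z w) =
      (∮ w in C(0, ρ), (w - z)⁻¹ • g w) - (∮ w in C(0, ρ), (w - z)⁻¹) • g z := by
    intro ρ hρ hzρ
    have hne : ∀ w ∈ sphere (0 : ℂ) ρ, w ≠ z := by
      rintro w hw rfl
      exact hzρ (mem_sphere_zero_iff_norm.mp hw)
    have hne0 : ∀ w ∈ sphere (0 : ℂ) ρ, w ≠ 0 := fun w hw => ne_zero_of_mem_sphere hρ.ne' ⟨w, hw⟩
    have hinv : ContinuousOn (fun w : ℂ => (w - z)⁻¹) (sphere 0 ρ) :=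
      (continuousOn_id.sub continuousOn_const).inv₀ fun w hw => sub_ne_zero.mpr (hne w hw)
    have hint₁ : CircleIntegrable (fun w => (w - z)⁻¹ • g w) 0 ρ :=
      (hinv.smul fun w hw => (hg w (hne0 w hw)).continuousAt.continuousWithinAt).circleIntegrable
        hρ.le
    have hint₂ : CircleIntegrable (fun w => (w - z)⁻¹ • g z) 0 ρ :=
      (hinv.smul continuousOn_const).circleIntegrable hρ.le
    rw [← circleIntegral.integral_smul_const, ← circleIntegral.integral_sub hint₁ hint₂]
    refine circleIntegral.integral_congr hρ.le fun w hw => ?_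
    simp only [dslope_of_ne g (hne w hw), slope_def_field, smul_eq_mul]
    field_simp [sub_ne_zero.mpr (hne w hw)]
  have houter : (∮ w in C(0, R), (w - z)⁻¹) = 2 * π * I :=
    circleIntegral.integral_sub_inv_of_mem_ball (mem_ball_zero_iff.mpr hzR)
  have hinner : (∮ w in C(0, r), (w - z)⁻¹) = 0 := by
    refine DiffContOnCl.circleIntegral_eq_zero hr.le (DifferentiableOn.diffContOnCl ?_)
    rw [closure_ball 0 hr.ne']
    refine (differentiableOn_id.sub_const z).inv fun w hw => sub_ne_zero.mpr ?_
    rintro rfl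
    exact (mem_closedBall_zero_iff.mp hw).not_gt hrz
  rw [hsplit R (hr.trans (hrz.trans hzR)) hzR.ne, hsplit r hr hrz.ne', houter, hinner] at hgoursat
  unfold circleCauchy
  have h2πI : (2 * π * I : ℂ) ≠ 0 := by simp [Real.pi_ne_zero, I_ne_zero]
  simp only [smul_eq_mul] at hgoursat ⊢
  rw [← mul_sub, eq_comm, inv_mul_eq_iff_eq_mul₀ h2πI]
  linear_combination hgoursat

lemma circleCauchy_norm_add_one_eq (hg : ∀ w, w ≠ 0 → DifferentiableAt ℂ g w) {z : ℂ} {R : ℝ}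
    (hzR : ‖z‖ < R) : circleCauchy g (‖z‖ + 1) z = circleCauchy g R z := by
  have hne : ∀ ρ, ‖z‖ < ρ → ∀ w, ρ ≤ ‖w‖ → w ≠ z := by
    rintro ρ hρ w hw rfl
    linarith
  rcases le_total (‖z‖ + 1) R with h | h
  · exact circleCauchy_eq_of_forall_ne hg (by positivity) h fun w hw _ =>
      hne _ (lt_add_one _) w hw
  · exact (circleCauchy_eq_of_forall_ne hg ((norm_nonneg z).trans_lt hzR) h fun w hw _ =>
      hne R hzR w hw).symm

lemma differentiable_circleCauchy_norm_add_one (hg : ∀ w, w ≠ 0 → DifferentiableAt ℂ g w) :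
    Differentiable ℂ fun z => circleCauchy g (‖z‖ + 1) z := by
  intro z₀
  set R : NNReal := ⟨‖z₀‖ + 1, by positivity⟩
  have hR : (0 : ℝ) < R := show (0 : ℝ) < ‖z₀‖ + 1 by positivity
  have hz₀ : z₀ ∈ ball (0 : ℂ) R := mem_ball_zero_iff.mpr (lt_add_one _)
  have hdiff : DifferentiableOn ℂ (circleCauchy g R) (ball 0 R) := by
    rw [← Metric.eball_coe]
    exact (hasFPowerSeriesOn_cauchy_integral
      ((continuousOn_sphere_zero hg hR).circleIntegrable hR.le) hR).differentiableOn
  refine (hdiff.differentiableAt (isOpen_ball.mem_nhds hz₀)).congr_of_eventuallyEq ?_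
  filter_upwards [isOpen_ball.mem_nhds hz₀] with z hz
  exact circleCauchy_norm_add_one_eq hg (mem_ball_zero_iff.mp hz)

lemma tendsto_circleCauchy_one_cobounded (hg : ∀ w, w ≠ 0 → DifferentiableAt ℂ g w) :
    Tendsto (circleCauchy g 1) (cobounded ℂ) (𝓝 0) := by
  obtain ⟨C, hC⟩ := (isCompact_sphere (0 : ℂ) 1).exists_bound_of_continuousOn
    (continuousOn_sphere_zero hg one_pos)
  have hbound : ∀ z : ℂ, 1 < ‖z‖ → ‖circleCauchy g 1 z‖ ≤ 1 * ((‖z‖ - 1)⁻¹ * C) := by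
    intro z hz
    refine circleIntegral.norm_two_pi_i_inv_smul_integral_le_of_norm_le_const zero_le_one
      fun w hw => ?_
    have hlow : ‖z‖ - 1 ≤ ‖w - z‖ := by
      simpa [mem_sphere_zero_iff_norm.mp hw, norm_sub_rev] using norm_sub_norm_le z w
    rw [norm_smul, norm_inv]
    exact mul_le_mul (inv_anti₀ (by linarith) hlow) (hC w hw) (norm_nonneg _)
      (inv_nonneg.mpr (by linarith))
  have hlim : Tendsto (fun z : ℂ => 1 * ((‖z‖ - 1)⁻¹ * C)) (cobounded ℂ) (𝓝 0) := by
    simpa [sub_eq_add_neg] using ((tendsto_norm_cobounded_atTop.atTop_add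
      (tendsto_const_nhds (x := (-1 : ℝ)))).inv_tendsto_atTop.mul_const C).const_mul 1
  refine squeeze_zero_norm' ?_ hlim
  filter_upwards [tendsto_norm_cobounded_atTop.eventually_gt_atTop 1] with z hz using hbound z hz

lemma tendsto_sub_circleCauchy_cobounded (hg : ∀ w, w ≠ 0 → DifferentiableAt ℂ g w) :
    Tendsto (fun z => g z - circleCauchy g (‖z‖ + 1) z) (cobounded ℂ) (𝓝 0) := by
  rw [← neg_zero]
  refine (tendsto_circleCauchy_one_cobounded hg).neg.congr' ?_
  filter_upwards [tendsto_norm_cobounded_atTop.eventually_gt_atTop 1] with z hz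
  rw [eq_circleCauchy_sub_circleCauchy hg one_pos hz (lt_add_one _)]
  ring

theorem exists_differentiable_eq_add_inv_mul (hg : ∀ w, w ≠ 0 → DifferentiableAt ℂ g w) :
    ∃ P R : ℂ → ℂ, Differentiable ℂ P ∧ Differentiable ℂ R ∧
      ∀ z, z ≠ 0 → g z = P z + z⁻¹ * R z⁻¹ := by
  set P := fun z => circleCauchy g (‖z‖ + 1) z
  have hP : Differentiable ℂ P := differentiable_circleCauchy_norm_add_one hg
  set Q := Function.update (fun v => g v⁻¹ - P v⁻¹) 0 0
  have hQ : ∀ v, v ≠ 0 → Q v = g v⁻¹ - P v⁻¹ := fun v hv => Function.update_of_ne hv _ _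
  have hQd : ∀ v, v ≠ 0 → DifferentiableAt ℂ Q v := by
    intro v hv
    refine (((hg _ (inv_ne_zero hv)).comp v (differentiableAt_inv hv)).sub
      ((hP _).comp v (differentiableAt_inv hv))).congr_of_eventuallyEq ?_
    filter_upwards [isOpen_compl_singleton.mem_nhds hv] with w hw using hQ w hw
  have hQcont : ContinuousAt Q 0 := continuousAt_update_same.mpr
    ((tendsto_sub_circleCauchy_cobounded hg).comp tendsto_inv₀_nhdsNE_zero)
  have hQdiff : Differentiable ℂ Q := fun v => by
    obtain rfl | hv := eq_or_ne v 0
    · exact (analyticAt_of_differentiable_on_punctured_nhds_of_continuousAt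
        (eventually_mem_nhdsWithin.mono hQd) hQcont).differentiableAt
    · exact hQd v hv
  refine ⟨P, dslope Q 0, hP, ?_, fun z hz => ?_⟩
  · exact hQdiff.dslope 0
  · have hQ0 : Q 0 = 0 := Function.update_self _ _ _
    have := sub_smul_dslope Q 0 z⁻¹
    rw [hQ _ (inv_ne_zero hz), hQ0, inv_inv, sub_zero, sub_zero, smul_eq_mul] at this
    rw [this]
    ring

end Laurent

lemma eq_zero_of_add_inv_mul_eq_zero {P R : ℂ → ℂ} (hP : Differentiable ℂ P)
    (hR : Differentiable ℂ R) (h : ∀ z, z ≠ 0 → P z + z⁻¹ * R z⁻¹ = 0) (z : ℂ) : P z = 0 := by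
  have hlim : Tendsto (fun z => -(z⁻¹ * R z⁻¹)) (cocompact ℂ) (𝓝 0) := by
    rw [← cobounded_eq_cocompact]
    simpa using (tendsto_inv₀_cobounded.mul
      ((hR.continuous.tendsto 0).comp tendsto_inv₀_cobounded)).neg
  refine hP.apply_eq_of_tendsto_cocompact z (hlim.congr' ?_)
  filter_upwards [(isCompact_singleton (x := (0 : ℂ))).compl_mem_cocompact] with w hw
  linear_combination -(h w hw)

lemma eq_zero_and_eq_zero_of_add_inv_mul_eq_zero {P R : ℂ → ℂ} (hP : Differentiable ℂ P)
    (hR : Differentiable ℂ R) (h : ∀ z, z ≠ 0 → P z + z⁻¹ * R z⁻¹ = 0) :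
    (∀ z, P z = 0) ∧ ∀ w, R w = 0 := by
  refine ⟨eq_zero_of_add_inv_mul_eq_zero hP hR h,
    eq_zero_of_add_inv_mul_eq_zero hR hP fun w hw => ?_⟩
  have := h w⁻¹ (inv_ne_zero hw)
  rw [inv_inv] at this
  linear_combination w⁻¹ * this - R w * mul_inv_cancel₀ hw

lemma summable_of_succ_eq_mul_pow {q w : ℂ} (hq : ‖q‖ < 1) {u : ℕ → ℂ}
    (hu : ∀ n, u (n + 1) = u n * (w * q ^ n)) : Summable u := by
  refine summable_of_ratio_norm_eventually_le (r := 1 / 2) (by norm_num) ?_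
  have h : Tendsto (fun n : ℕ => ‖w * q ^ n‖) atTop (𝓝 0) := by
    simpa using ((tendsto_pow_atTop_nhds_zero_of_norm_lt_one hq).const_mul w).norm
  filter_upwards [h.eventually (eventually_le_nhds (by norm_num : (0 : ℝ) < 1 / 2))] with n hn
  rw [hu, norm_mul, mul_comm]
  exact mul_le_mul_of_nonneg_right hn (norm_nonneg _)

lemma tendsto_apply_pow_mul {F : ℂ → ℂ} (hF : ContinuousAt F 0) {q : ℂ} (hq : ‖q‖ < 1)
    (z : ℂ) : Tendsto (fun N : ℕ => F (q ^ N * z)) atTop (𝓝 (F 0)) :=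
  hF.tendsto.comp (by simpa using (tendsto_pow_atTop_nhds_zero_of_norm_lt_one hq).mul_const z)

theorem hasSum_of_eq_add_mul_apply_mul {F : ℂ → ℂ} (hF : ContinuousAt F 0) {q a c : ℂ}
    (hq : ‖q‖ < 1) (h : ∀ z, F z = c + a * z * F (q * z)) (z : ℂ) :
    HasSum (fun n : ℕ => c * (a ^ n * q ^ n.choose 2 * z ^ n)) (F z) := by
  set t : ℕ → ℂ := fun n => a ^ n * q ^ n.choose 2 * z ^ n
  have ht : ∀ n, t (n + 1) = t n * (a * z * q ^ n) := by
    intro n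
    simp only [t, Nat.choose_succ_succ', Nat.choose_one_right, pow_succ, pow_add]
    ring
  have hsum : Summable t := summable_of_succ_eq_mul_pow hq ht
  have htele : ∀ N, F z = ∑ k ∈ Finset.range N, c * t k + t N * F (q ^ N * z) := by
    intro N
    induction N with
    | zero => simp [t]
    | succ N ih =>
      rw [ih, Finset.sum_range_succ, h (q ^ N * z), ht,
        show q * (q ^ N * z) = q ^ (N + 1) * z by ring]
      ring
  have hrem : Tendsto (fun N => t N * F (q ^ N * z)) atTop (𝓝 0) := by
    simpa using hsum.tendsto_atTop_zero.mul (tendsto_apply_pow_mul hF hq z)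
  refine (hsum.mul_left c).hasSum_iff_tendsto_nat.mpr ?_
  simpa using (tendsto_const_nhds (x := F z)).sub hrem |>.congr
    fun N => (eq_sub_of_add_eq (htele N).symm).symm

lemma natCast_choose_two (n : ℕ) : (n.choose 2 : ℤ) = n * (n - 1) / 2 := by
  have h : 2 * (n.choose 2 : ℤ) = n * (n - 1) := by
    induction n with
    | zero => simp
    | succ n ih => push_cast [Nat.choose_succ_succ', Nat.choose_one_right]; linear_combination ih
  omega

theorem eq_mul_theta_of_apply_mul_eq {q : ℂ} (hq0 : q ≠ 0) (hq1 : ‖q‖ < 1) {g : ℂ → ℂ}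
    (hg : ∀ z, z ≠ 0 → DifferentiableAt ℂ g z) (hgq : ∀ z, z ≠ 0 → g (q * z) = -z⁻¹ * g z) :
    ∃ c, ∀ z, z ≠ 0 → g z = c * theta q z := by
  obtain ⟨P, R, hP, hR, hPR⟩ := exists_differentiable_eq_add_inv_mul hg
  have hd : ∀ z, z * dslope P 0 z = P z - P 0 := fun z => by simpa using sub_smul_dslope P 0 z
  -- `g (q z) + z⁻¹ g z`, with its terms sorted into a part entire in `z` and one in `z⁻¹`
  obtain ⟨hΦ, hΨ⟩ := eq_zero_and_eq_zero_of_add_inv_mul_eq_zero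
    (P := fun z => P (q * z) + dslope P 0 z) (R := fun w => P 0 + q⁻¹ * R (q⁻¹ * w) + w * R w)
    ((hP.comp (differentiable_id.const_mul q)).add (hP.dslope 0))
    (((differentiable_const _).add ((hR.comp (differentiable_id.const_mul _)).const_mul _)).add
      (differentiable_id.mul hR)) fun z hz => by
      have h := hgq z hz
      rw [hPR z hz, hPR (q * z) (mul_ne_zero hq0 hz), mul_inv] at h
      linear_combination h + z⁻¹ * hd z - dslope P 0 z * mul_inv_cancel₀ hz
  have hPrec : ∀ z, P z = P 0 + -1 * z * P (q * z) := fun z => by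
    linear_combination z * hΦ z - hd z
  have hRrec : ∀ u, R u = -q * P 0 + -q ^ 2 * u * R (q * u) := fun u => by
    have h := hΨ (q * u)
    rw [← mul_assoc, inv_mul_cancel₀ hq0, one_mul] at h
    linear_combination q * h - R u * mul_inv_cancel₀ hq0
  refine ⟨P 0, fun z hz => ?_⟩
  have hpos := hasSum_of_eq_add_mul_apply_mul hP.continuous.continuousAt hq1 hPrec z
  have hneg :=
    (hasSum_of_eq_add_mul_apply_mul hR.continuous.continuousAt hq1 hRrec z⁻¹).mul_left z⁻¹
  have hsum : HasSum (fun n : ℤ => P 0 * ((-z) ^ n * q ^ (n * (n - 1) / 2))) (g z) := by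
    rw [hPR z hz]
    refine HasSum.of_nat_of_neg_add_one (hpos.congr_fun fun k => ?_) (hneg.congr_fun fun m => ?_)
    · rw [← natCast_choose_two, zpow_natCast, zpow_natCast, neg_pow]
      ring
    · have hexp : (-((m : ℤ) + 1)) * (-((m : ℤ) + 1) - 1) / 2 = ((m + 2).choose 2 : ℕ) := by
        rw [natCast_choose_two]
        push_cast
        ring_nf
      have hchoose : (m + 2).choose 2 = m.choose 2 + 2 * m + 1 := by
        simp [Nat.choose_succ_succ']
        omega
      rw [hexp, hchoose, zpow_natCast, zpow_neg,
        show (m : ℤ) + 1 = ((m + 1 : ℕ) : ℤ) by push_cast; rfl, zpow_natCast, neg_pow, mul_inv,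
        ← inv_pow, inv_neg, inv_one]
      ring
  rw [← hsum.tsum_eq, tsum_mul_left, theta]

theorem exists_eq_const_of_apply_mul_eq {q : ℂ} (hq0 : q ≠ 0) (hq1 : ‖q‖ < 1) {h : ℂ → ℂ}
    (hd : ∀ z, z ≠ 0 → DifferentiableAt ℂ h z) (hq : ∀ z, z ≠ 0 → h (q * z) = h z) :
    ∃ c, ∀ z, z ≠ 0 → h z = c := by
  obtain ⟨P, R, hP, hR, hPR⟩ := exists_differentiable_eq_add_inv_mul hd
  obtain ⟨hΦ, hΨ⟩ := eq_zero_and_eq_zero_of_add_inv_mul_eq_zero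
    (P := fun z => P (q * z) - P z) (R := fun w => q⁻¹ * R (q⁻¹ * w) - R w)
    ((hP.comp (differentiable_id.const_mul q)).sub hP)
    (((hR.comp (differentiable_id.const_mul _)).const_mul _).sub hR) fun z hz => by
      have h := hq z hz
      rw [hPR z hz, hPR (q * z) (mul_ne_zero hq0 hz), mul_inv] at h
      linear_combination h
  have hPconst : ∀ z, P z = P 0 := fun z => by
    have hiter : ∀ N : ℕ, P (q ^ N * z) = P z := fun N => by
      induction N with
      | zero => simp
      | succ N ih => rw [pow_succ', mul_assoc, ← ih]; linear_combination hΦ (q ^ N * z)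
    exact tendsto_nhds_unique tendsto_const_nhds
      ((tendsto_apply_pow_mul hP.continuous.continuousAt hq1 z).congr hiter)
  have hRzero : ∀ u, R u = 0 := fun u => by
    have hiter : ∀ N : ℕ, q ^ N * R (q ^ N * u) = R u := fun N => by
      induction N with
      | zero => simp
      | succ N ih =>
        have h := hΨ (q * (q ^ N * u))
        rw [← mul_assoc, inv_mul_cancel₀ hq0, one_mul] at h
        rw [← ih, pow_succ', mul_assoc, mul_assoc]
        linear_combination (-q * q ^ N) * h + q ^ N * R (q ^ N * u) * mul_inv_cancel₀ hq0
    have hlim := ((tendsto_pow_atTop_nhds_zero_of_norm_lt_one hq1).mul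
      (tendsto_apply_pow_mul hR.continuous.continuousAt hq1 u))
    rw [zero_mul] at hlim
    exact tendsto_nhds_unique tendsto_const_nhds (hlim.congr hiter)
  exact ⟨P 0, fun z hz => by rw [hPR z hz, hPconst, hRzero, mul_zero, add_zero]⟩

lemma apply_eq_apply_mul_one {q : ℂ} (hq0 : q ≠ 0) (hq1 : ‖q‖ < 1) {f : ℂ × ℂ → ℂ}
    (hf : ∀ x y, x ≠ 0 → y ≠ 0 → DifferentiableAt ℂ f (x, y))
    (heq₁ : ∀ x y, x ≠ 0 → y ≠ 0 → f (q * x, y) = -(x * y)⁻¹ * f (x, y))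
    (heq₂ : ∀ x y, x ≠ 0 → y ≠ 0 → f (x, q * y) = -(x * y)⁻¹ * f (x, y))
    {x y : ℂ} (hx : x ≠ 0) (hy : y ≠ 0) : f (x, y) = f (x * y, 1) := by
  have hs : x * y ≠ 0 := mul_ne_zero hx hy
  obtain ⟨c, hc⟩ := exists_eq_const_of_apply_mul_eq hq0 hq1 (h := fun t => f (t, x * y * t⁻¹))
    (fun t ht => (hf t _ ht (mul_ne_zero hs (inv_ne_zero ht))).comp t
      (differentiableAt_id.prodMk ((differentiableAt_inv ht).const_mul (x * y))))
    fun t ht => by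
      have ht' : x * y * (q * t)⁻¹ ≠ 0 := mul_ne_zero hs (inv_ne_zero (mul_ne_zero hq0 ht))
      have hy' : q * (x * y * (q * t)⁻¹) = x * y * t⁻¹ := by field_simp
      rw [heq₁ t _ ht ht', ← hy', heq₂ t _ ht ht']
  have hx' : f (x, y) = c := by simpa [mul_comm x y, hx] using hc x hx
  have hs' : f (x * y, 1) = c := by simpa only [mul_inv_cancel₀ hs] using hc (x * y) hs
  rw [hx', hs']

/-- For `0 < |q| < 1`, any `f : ℂ × ℂ → ℂ` holomorphic on `(ℂ ∖ {0}) × (ℂ ∖ {0})`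
satisfying `f(qx, y) = −(x·y)⁻¹·f(x, y)` and `f(x, qy) = −(x·y)⁻¹·f(x, y)` is a constant
multiple of `(x,y) ↦ ϑ(x·y;q)`: the space of global sections `H⁰(E × E^∨, Θ(xy))` is
one-dimensional. -/
theorem sections_product_theta (q : ℂ)
    (hq0 : 0 < ‖q‖) (hq1 : ‖q‖ < 1)
    (f : ℂ × ℂ → ℂ)
    (hf : ∀ x y : ℂ, x ≠ 0 → y ≠ 0 → DifferentiableAt ℂ f (x, y))
    (heq₁ : ∀ x y : ℂ, x ≠ 0 → y ≠ 0 → f (q * x, y) = -(x * y)⁻¹ * f (x, y))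
    (heq₂ : ∀ x y : ℂ, x ≠ 0 → y ≠ 0 → f (x, q * y) = -(x * y)⁻¹ * f (x, y)) :
    ∃ c : ℂ, ∀ x y : ℂ, x ≠ 0 → y ≠ 0 → f (x, y) = c * theta q (x * y) := by
  have hq : q ≠ 0 := norm_pos_iff.mp hq0
  obtain ⟨c, hc⟩ := eq_mul_theta_of_apply_mul_eq hq hq1 (g := fun z => f (z, 1))
    (fun z hz => (hf z 1 hz one_ne_zero).comp z
      (differentiableAt_id.prodMk (differentiableAt_const 1)))
    (fun z hz => by simpa using heq₁ z 1 hz one_ne_zero)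
  exact ⟨c, fun x y hx hy =>
    (apply_eq_apply_mul_one hq hq1 hf heq₁ heq₂ hx hy).trans (hc _ (mul_ne_zero hx hy))⟩
end
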